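/- arXiv:1504.01007 — 9 statements merged into one kernel-verified Lean document; each statement's English description precedes it below -/
import Mathlib

section
/- A polynomial f in k variables over a field K of total degree at most n is uniquely determined by its values on the combinatorial simplex {(a_{1,t_1}, ..., a_{k,t_k}) : t_1 + ... + t_k ≤ n}, where for each i, A_i = {a_{i,0}, a_{i,1}, ..., a_{i,n}} is a set of n+1 distinct elements of K. That is, if two polynomials of degree at most n agree on all such points, they are equal. -/
/-!
If `p ≠ 0` has total degree `≤ n`, pick a monomial `X^t` of `p` of top degree `|t| ≤ n`. By
Alon's combinatorial Nullstellensatz `p` does not vanish on the box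
`∏ i, {a i 0, …, a i (t i)}`, and every point of that box lies on the simplex since `|t| ≤ n`.
-/

open MvPolynomial

namespace MvPolynomial

theorem exists_mem_support_degree_eq_totalDegree {σ R : Type*} [CommSemiring R]
    {p : MvPolynomial σ R} (hp : p ≠ 0) : ∃ t ∈ p.support, t.degree = p.totalDegree := by
  obtain ⟨t, ht, hsup⟩ := p.support.exists_mem_eq_sup (support_nonempty.mpr hp)
    fun s => s.sum fun _ e => e
  exact ⟨t, ht, hsup.symm⟩

theorem eq_zero_of_eval_simplex_eq_zero {σ R : Type*} [Fintype σ] [CommRing R] [IsDomain R]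
    {n : ℕ} (a : σ → Fin (n + 1) → R) (ha : ∀ i, Function.Injective (a i))
    {p : MvPolynomial σ R} (hp : p.totalDegree ≤ n)
    (hzero : ∀ t : σ → Fin (n + 1), ∑ i, (t i : ℕ) ≤ n → eval (fun i => a i (t i)) p = 0) :
    p = 0 := by
  by_contra hp0
  obtain ⟨t, ht, hdeg⟩ := exists_mem_support_degree_eq_totalDegree hp0
  have ht_le (i : σ) : t i + 1 ≤ n + 1 := by
    have := t.le_degree i
    omega
  let box (i : σ) : Finset R :=
    Finset.univ.map ⟨fun j : Fin (t i + 1) => a i (Fin.castLE (ht_le i) j),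
      (ha i).comp (Fin.castLE_injective _)⟩
  have hcard (i : σ) : t i < (box i).card := by
    simp [box]
  obtain ⟨x, hx, hpx⟩ := combinatorial_nullstellensatz_exists_eval_nonzero p t
    (mem_support_iff.mp ht) hdeg.symm box hcard
  simp only [box, Finset.mem_map, Finset.mem_univ, true_and, Function.Embedding.coeFn_mk] at hx
  choose s hs using hx
  have hx_eq : x = fun i => a i (Fin.castLE (ht_le i) (s i)) := by
    funext i
    exact (hs i).symm
  refine hpx (hx_eq ▸ hzero _ ?_)
  calc ∑ i, (Fin.castLE (ht_le i) (s i) : ℕ)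
      ≤ ∑ i, t i := Finset.sum_le_sum fun i _ => Nat.lt_succ_iff.mp (s i).isLt
    _ = p.totalDegree := by rw [← t.degree_eq_sum, hdeg]
    _ ≤ n := hp

end MvPolynomial

theorem stmt_0_general {K : Type*} [Field K] (k n : ℕ)
    (a : Fin k → Fin (n + 1) → K) (ha : ∀ i, Function.Injective (a i))
    (f g : MvPolynomial (Fin k) K)
    (hf : f.totalDegree ≤ n) (hg : g.totalDegree ≤ n)
    (h : ∀ t : Fin k → Fin (n + 1), (∑ i, (t i : ℕ)) ≤ n →
      eval (fun i => a i (t i)) f = eval (fun i => a i (t i)) g) :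
    f = g := by
  rw [← sub_eq_zero]
  refine eq_zero_of_eval_simplex_eq_zero a ha ((totalDegree_sub f g).trans (max_le hf hg)) ?_
  intro t ht
  rw [map_sub, sub_eq_zero]
  exact h t ht

/-- A polynomial of total degree at most `n` in `k` variables over a field `K`
is uniquely determined by its values on the combinatorial simplex
`{(a 1 (t 1), …, a k (t k)) : t 1 + ⋯ + t k ≤ n}`, where each `A i = {a i 0, …, a i n}`
consists of `n+1` pairwise distinct elements of `K`. -/
theorem stmt_0 {K : Type*} [Field K] (k n : ℕ) (hk : 0 < k) (hn : 0 < n)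
    (a : Fin k → Fin (n + 1) → K) (ha : ∀ i, Function.Injective (a i))
    (f g : MvPolynomial (Fin k) K)
    (hf : f.totalDegree ≤ n) (hg : g.totalDegree ≤ n)
    (h : ∀ t : Fin k → Fin (n + 1), (∑ i, (t i : ℕ)) ≤ n →
      eval (fun i => a i (t i)) f = eval (fun i => a i (t i)) g) :
    f = g :=
  stmt_0_general k n a ha f g hf hg h
end

section
/- If a polynomial f in k variables over a field of characteristic zero has total degree at most n and vanishes on all points (t_1,...,t_k) with nonnegative integers t_i summing to at most n-1, then f(x_1,...,x_k) = ∑_{c_1+...+c_k=n} f(c_1,...,c_k) · ∏_{i=1}^k binom(x_i, c_i), where binom(x,c) = x(x-1)···(x-c+1)/c! is the polynomial binomial coefficient. -/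
open MvPolynomial Finset

/-- The falling factorial of a multivariate polynomial: `p (p-1) ⋯ (p-m+1)`. -/
noncomputable def fallFac {k : ℕ} (p : MvPolynomial (Fin k) ℚ) (m : ℕ) :
    MvPolynomial (Fin k) ℚ :=
  ∏ j ∈ Finset.range m, (p - (j : MvPolynomial (Fin k) ℚ))

/-- The polynomial binomial coefficient `binom(X i, c) = X i (X i - 1)⋯(X i - c + 1)/c!`. -/
noncomputable def binomPoly {k : ℕ} (i : Fin k) (c : ℕ) : MvPolynomial (Fin k) ℚ :=
  C ((c.factorial : ℚ)⁻¹) * fallFac (X i) c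

/-!
A polynomial `f` of total degree `≤ n` vanishing on the lattice simplex `{t ∈ ℕᵏ | ∑ tᵢ ≤ n}` is
zero, by induction on `k` and `n`: the restriction `f(0, x')` vanishes on a simplex in one
dimension less, so `f = x₀ g`, and then `g(x + e₀)` has degree `≤ n - 1` and vanishes on the
simplex of size `n - 1`. The interpolant `R = ∑_{|c| = n} f(c) ∏ binom(xᵢ, cᵢ)` has degree `≤ n`,
and at a lattice point `t` with `|t| ≤ n` we have `∏ binom(tᵢ, cᵢ) = δ_{tc}` because
`binom(tᵢ, cᵢ) = 0` once `tᵢ < cᵢ`. So `f - R` vanishes on the simplex of size `n`.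
-/

namespace MvPolynomial

section Translate

variable {σ τ R : Type*}

theorem totalDegree_bind₁_le [CommSemiring R] {φ : σ → MvPolynomial τ R}
    (hφ : ∀ i, (φ i).totalDegree ≤ 1) (p : MvPolynomial σ R) :
    (bind₁ φ p).totalDegree ≤ p.totalDegree := by
  conv_lhs => rw [p.as_sum, map_sum]
  refine totalDegree_finsetSum_le fun m hm => ?_
  rw [bind₁_monomial]
  calc (C (coeff m p) * ∏ i ∈ m.support, φ i ^ m i).totalDegree
      ≤ ∑ i ∈ m.support, (φ i ^ m i).totalDegree := by
        refine (totalDegree_mul _ _).trans ?_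
        rw [totalDegree_C, zero_add]
        exact totalDegree_finsetProd _ _
    _ ≤ ∑ i ∈ m.support, m i := sum_le_sum fun i _ =>
        (totalDegree_pow _ _).trans ((Nat.mul_le_mul_left (m i) (hφ i)).trans_eq (mul_one _))
    _ ≤ p.totalDegree := le_totalDegree hm

theorem totalDegree_X_le [CommSemiring R] (i : σ) :
    (X i : MvPolynomial σ R).totalDegree ≤ 1 :=
  (totalDegree_monomial_le _ _).trans (by simp)

variable [CommRing R]

noncomputable def translate (a : σ → R) : MvPolynomial σ R →ₐ[R] MvPolynomial σ R :=
  bind₁ fun i => X i + C (a i)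

theorem eval_translate (v a : σ → R) (p : MvPolynomial σ R) :
    eval v (translate a p) = eval (v + a) p := by
  change eval₂Hom (RingHom.id R) v (bind₁ _ p) = _
  rw [eval₂Hom_bind₁]
  simp [Pi.add_def]

theorem translate_neg_translate (a : σ → R) (p : MvPolynomial σ R) :
    translate (-a) (translate a p) = p := by
  have h : (translate (-a)).comp (translate a) = AlgHom.id R _ :=
    algHom_ext fun i => by simp [translate]
  exact DFunLike.congr_fun h p

theorem translate_injective (a : σ → R) : Function.Injective (translate a) :=
  Function.LeftInverse.injective (translate_neg_translate a)

theorem totalDegree_translate_le (a : σ → R) (p : MvPolynomial σ R) :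
    (translate a p).totalDegree ≤ p.totalDegree :=
  totalDegree_bind₁_le
    (fun i => (totalDegree_add _ _).trans (max_le (totalDegree_X_le i) (by simp))) p

end Translate

section Simplex

variable {R : Type*} [CommRing R] {k : ℕ}

theorem X_zero_dvd_iff (f : MvPolynomial (Fin (k + 1)) R) :
    X 0 ∣ f ↔ (finSuccEquiv R k f).coeff 0 = 0 := by
  rw [← Polynomial.X_dvd_iff, ← finSuccEquiv_X_zero, map_dvd_iff]

theorem eval_natCast_coeff_zero_finSuccEquiv (t : Fin k → ℕ) (f : MvPolynomial (Fin (k + 1)) R) :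
    eval (fun i => (t i : R)) ((finSuccEquiv R k f).coeff 0) =
      eval (fun i => ((Fin.cons 0 t : Fin (k + 1) → ℕ) i : R)) f := by
  have hcons : (fun i => ((Fin.cons 0 t : Fin (k + 1) → ℕ) i : R)) =
      Fin.cons 0 (fun i => (t i : R)) := by
    funext i
    cases i using Fin.cases <;> simp
  rw [hcons, eval_eq_eval_mv_eval', ← Polynomial.coeff_zero_eq_eval_zero, Polynomial.coeff_map]

theorem eq_zero_of_totalDegree_eq_zero {σ : Type*} {f : MvPolynomial σ R}
    (hdeg : f.totalDegree = 0) {v : σ → R} (hv : eval v f = 0) : f = 0 := by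
  rw [totalDegree_eq_zero_iff_eq_C] at hdeg
  rw [hdeg, eval_C] at hv
  rw [hdeg, hv, C_0]

variable [IsDomain R] [CharZero R]

theorem eval_translate_single_eq_zero_of_X_mul {σ : Type*} [Fintype σ] [DecidableEq σ]
    {i : σ} {n : ℕ} {g : MvPolynomial σ R}
    (hvan : ∀ t : σ → ℕ, ∑ j, t j ≤ n + 1 → eval (fun j => (t j : R)) (X i * g) = 0)
    (t : σ → ℕ) (ht : ∑ j, t j ≤ n) :
    eval (fun j => (t j : R)) (translate (Pi.single i 1) g) = 0 := by
  have hshift : (fun j => (((t + Pi.single i 1 : σ → ℕ) j : ℕ) : R)) =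
      (fun j => (t j : R)) + Pi.single i 1 := by
    funext j
    rcases eq_or_ne j i with rfl | hj <;> simp [*]
  have h := hvan (t + Pi.single i 1) (by simp [sum_add_distrib]; omega)
  rw [hshift, map_mul, eval_X] at h
  rw [eval_translate]
  exact (mul_eq_zero.mp h).resolve_left (by simp [Nat.cast_add_one_ne_zero])

theorem eq_zero_of_totalDegree_le_of_eval_zero_on_simplex {n : ℕ} {f : MvPolynomial (Fin k) R}
    (hdeg : f.totalDegree ≤ n)
    (hvan : ∀ t : Fin k → ℕ, ∑ i, t i ≤ n → eval (fun i => (t i : R)) f = 0) : f = 0 := by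
  induction k generalizing n with
  | zero =>
    refine eq_zero_of_totalDegree_eq_zero ?_ (hvan 0 (by simp))
    rw [eq_C_of_isEmpty f, totalDegree_C]
  | succ k ihk =>
  induction n generalizing f with
  | zero => exact eq_zero_of_totalDegree_eq_zero (Nat.le_zero.mp hdeg) (hvan 0 (by simp))
  | succ n ihn =>
  obtain ⟨g, rfl⟩ : X 0 ∣ f := by
    rw [X_zero_dvd_iff]
    by_contra hne
    refine hne (ihk ((totalDegree_coeff_finSuccEquiv_add_le f 0 hne).trans hdeg) fun t ht => ?_)
    rw [eval_natCast_coeff_zero_finSuccEquiv]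
    exact hvan _ (by simpa [Fin.sum_cons] using ht)
  rcases eq_or_ne g 0 with rfl | hg
  · exact mul_zero _
  have hgdeg : g.totalDegree ≤ n := by
    rw [totalDegree_mul_of_isDomain (X_ne_zero 0) hg, totalDegree_X] at hdeg
    omega
  suffices translate (Pi.single 0 1) g = 0 by
    rw [translate_injective _ (this.trans (map_zero _).symm), mul_zero]
  exact ihn ((totalDegree_translate_le _ _).trans hgdeg)
    (eval_translate_single_eq_zero_of_X_mul hvan)

end Simplex

end MvPolynomial

theorem eval_binomPoly_natCast {k : ℕ} (t : Fin k → ℕ) (i : Fin k) (c : ℕ) :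
    eval (fun j => (t j : ℚ)) (binomPoly i c) = (t i).choose c := by
  rw [binomPoly, map_mul, eval_C, fallFac, map_prod]
  simp only [map_sub, eval_X, map_natCast]
  rw [← descPochhammer_eval_eq_prod_range, descPochhammer_eval_eq_descFactorial,
    Nat.descFactorial_eq_factorial_mul_choose, Nat.cast_mul]
  field_simp

theorem totalDegree_binomPoly_le {k : ℕ} (i : Fin k) (c : ℕ) :
    (binomPoly i c).totalDegree ≤ c := by
  have hfactor (j : ℕ) : (X i - (j : MvPolynomial (Fin k) ℚ)).totalDegree ≤ 1 := by
    rw [← C_eq_coe_nat]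
    exact (totalDegree_sub_C_le _ _).trans (totalDegree_X_le i)
  refine (totalDegree_mul _ _).trans ?_
  rw [totalDegree_C, zero_add, fallFac]
  exact (totalDegree_finsetProd _ _).trans
    ((sum_le_sum fun j _ => hfactor j).trans (by simp))

theorem prod_choose_eq_ite {ι : Type*} [Fintype ι] [DecidableEq ι] {t c : ι → ℕ}
    (h : ∑ i, t i ≤ ∑ i, c i) : ∏ i, (t i).choose (c i) = if t = c then 1 else 0 := by
  split_ifs with htc
  · simp [htc]
  obtain ⟨i, hi⟩ : ∃ i, t i < c i := by
    by_contra! hle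
    exact htc (funext fun i => ((sum_eq_sum_iff_of_le fun i _ => hle i).mp
      (le_antisymm (sum_le_sum fun i _ => hle i) h) i (mem_univ i)).symm)
  exact prod_eq_zero (mem_univ i) (Nat.choose_eq_zero_of_lt hi)

theorem mem_filter_sum_eq_iff {ι : Type*} [Fintype ι] [DecidableEq ι] {n : ℕ} {t : ι → ℕ} :
    t ∈ (Fintype.piFinset fun _ : ι => range (n + 1)).filter (fun c => ∑ i, c i = n) ↔
      ∑ i, t i = n := by
  refine ⟨fun h => (mem_filter.mp h).2, fun h => mem_filter.mpr ⟨?_, h⟩⟩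
  refine Fintype.mem_piFinset.mpr fun i => mem_range.mpr (Nat.lt_succ_of_le ?_)
  exact h ▸ single_le_sum (fun j _ => Nat.zero_le (t j)) (mem_univ i)

theorem totalDegree_C_mul_prod_binomPoly_le {k : ℕ} (a : ℚ) (c : Fin k → ℕ) :
    (C a * ∏ i, binomPoly i (c i)).totalDegree ≤ ∑ i, c i := by
  refine (totalDegree_mul _ _).trans ?_
  rw [totalDegree_C, zero_add]
  exact (totalDegree_finsetProd _ _).trans
    (sum_le_sum fun i _ => totalDegree_binomPoly_le i (c i))

theorem eval_sum_C_mul_prod_binomPoly {k : ℕ} (a : (Fin k → ℕ) → ℚ) (S : Finset (Fin k → ℕ))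
    (t : Fin k → ℕ) (hS : ∀ c ∈ S, ∑ i, t i ≤ ∑ i, c i) :
    eval (fun i => (t i : ℚ)) (∑ c ∈ S, C (a c) * ∏ i, binomPoly i (c i)) =
      if t ∈ S then a t else 0 := by
  simp only [map_sum, map_mul, eval_C, map_prod, eval_binomPoly_natCast, ← Nat.cast_prod]
  rw [sum_congr rfl fun c hc => by rw [prod_choose_eq_ite (hS c hc)]]
  simp [sum_ite_eq]

theorem stmt_1_general (k n : ℕ) (f : MvPolynomial (Fin k) ℚ)
    (hdeg : f.totalDegree ≤ n)
    (hvan : ∀ t : Fin k → ℕ, (∑ i, t i) < n → eval (fun i => (t i : ℚ)) f = 0) :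
    f = ∑ c ∈ (Fintype.piFinset fun _ : Fin k => Finset.range (n + 1)).filter
        (fun c => ∑ i, c i = n),
      C (eval (fun i => (c i : ℚ)) f) * ∏ i, binomPoly i (c i) := by
  rw [← sub_eq_zero]
  refine eq_zero_of_totalDegree_le_of_eval_zero_on_simplex (n := n) ?_ fun t ht => ?_
  · refine (totalDegree_sub _ _).trans (max_le hdeg (totalDegree_finsetSum_le fun c hc => ?_))
    exact (totalDegree_C_mul_prod_binomPoly_le _ c).trans (mem_filter_sum_eq_iff.mp hc).le
  · rw [map_sub, eval_sum_C_mul_prod_binomPoly _ _ t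
      fun c hc => (mem_filter_sum_eq_iff.mp hc).symm ▸ ht]
    split_ifs with htS
    · exact sub_self _
    · rw [sub_zero]
      exact hvan t (lt_of_le_of_ne ht (mt mem_filter_sum_eq_iff.mpr htS))

/-- If `f` has total degree at most `n` and vanishes on all tuples of nonnegative
integers with sum `< n`, then `f = ∑_{c₁+⋯+c_k=n} f(c) ∏ᵢ binom(xᵢ, cᵢ)`. -/
theorem stmt_1 (k n : ℕ) (hk : 0 < k) (f : MvPolynomial (Fin k) ℚ)
    (hdeg : f.totalDegree ≤ n)
    (hvan : ∀ t : Fin k → ℕ, (∑ i, t i) < n → eval (fun i => (t i : ℚ)) f = 0) :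
    f = ∑ c ∈ (Fintype.piFinset fun _ : Fin k => Finset.range (n + 1)).filter
        (fun c => ∑ i, c i = n),
      C (eval (fun i => (c i : ℚ)) f) * ∏ i, binomPoly i (c i) :=
  stmt_1_general k n f hdeg hvan
end

section
/- The following polynomial identity holds: ∏_{1≤i<j≤k}(x_j - x_i) · ((∑_{i=1}^k x_i) - k(k-1)/2)^{(n)} = ∑_{n_1+...+n_k = n + k(k-1)/2} (n!/∏ n_i!) · ∏_{i<j}(n_j - n_i) · ∏_{i=1}^k x_i^{(n_i)}, where y^{(n)} = y(y-1)···(y-n+1) denotes a falling factorial and the sum is over k-tuples of nonnegative integers. -/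
/-!
Write `x^{(m)}` for the falling factorial. Since `x^{(j)}` is monic of degree `j`, the Vandermonde
product is the determinant of `(x_i^{(j)})`, so the left side is
`∑_σ sign σ · ∏ᵢ x_i^{(σ i)} · (∑ᵢ (x_i - σ i))^{(n)}`, because `∑ᵢ σ i = k(k-1)/2`.
The multinomial Chu–Vandermonde identity expands the last factor, and
`x^{(a)} (x - a)^{(m)} = x^{(a+m)}` merges each term into `∏ᵢ x_i^{(c_i)}` with `c = σ + m`, with
coefficient `n! / ∏ᵢ (c_i - σ i)! = n! / ∏ᵢ c_i! · ∏ᵢ c_i^{(σ i)}`. This coefficient vanishes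
unless `σ ≤ c`, so every `c` may be summed over, and the sum over `σ` of the signed
coefficients is again a Vandermonde determinant, now at the integer point `c`.
-/

open MvPolynomial Finset

open scoped Nat

theorem Finset.prod_filter_lt_eq_prod_prod_Ioi {ι M : Type*} [Fintype ι] [LinearOrder ι]
    [LocallyFiniteOrderTop ι] [CommMonoid M] (f : ι → ι → M) :
    ∏ p ∈ univ.filter (fun p : ι × ι => p.1 < p.2), f p.1 p.2 = ∏ i, ∏ j ∈ Ioi i, f i j := by
  simp only [prod_filter, ← univ_product_univ, prod_product, ← filter_lt_eq_Ioi]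

theorem Finset.filter_piFinset_range_sum_eq_piAntidiag {ι : Type*} [Fintype ι] [DecidableEq ι]
    (N : ℕ) :
    (Fintype.piFinset fun _ : ι => range (N + 1)).filter (fun c => ∑ i, c i = N) =
      univ.piAntidiag N := by
  ext c
  simp only [mem_filter, Fintype.mem_piFinset, mem_range, mem_piAntidiag, mem_univ,
    implies_true, and_true, and_iff_right_iff_imp]
  intro h i
  have := single_le_sum (fun j _ => Nat.zero_le (c j)) (mem_univ i)
  omega

theorem Nat.cast_multinomial_eq_div_mul_prod_descFactorial {ι : Type*} (s : Finset ι)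
    (a m : ι → ℕ) :
    (multinomial s m : ℚ) =
      (∑ i ∈ s, m i)! / (∏ i ∈ s, ((a i + m i)! : ℚ)) *
        ∏ i ∈ s, ((a i + m i).descFactorial (a i) : ℚ) := by
  have h_fac (i : ι) : ((a i + m i)! : ℚ) = (m i)! * (a i + m i).descFactorial (a i) := by
    have := factorial_mul_descFactorial (Nat.le_add_right (a i) (m i))
    rw [Nat.add_sub_cancel_left] at this
    exact_mod_cast this.symm
  have h_desc : ∏ i ∈ s, ((a i + m i).descFactorial (a i) : ℚ) ≠ 0 :=
    prod_ne_zero_iff.mpr fun i _ => by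
      exact_mod_cast (descFactorial_pos.mpr (Nat.le_add_right _ _)).ne'
  have h_fac_m : ∏ i ∈ s, ((m i)! : ℚ) ≠ 0 :=
    prod_ne_zero_iff.mpr fun i _ => by exact_mod_cast (m i).factorial_ne_zero
  simp_rw [h_fac]
  rw [prod_mul_distrib, ← multinomial_spec s m]
  push_cast
  field_simp

section DescPochhammer

variable {R : Type*} [CommRing R]

theorem descPochhammer_int_smeval_eq_eval (k : ℕ) (r : R) :
    (descPochhammer ℤ k).smeval r = (descPochhammer R k).eval r := by
  rw [← Polynomial.aeval_eq_smeval, Polynomial.aeval_def, ← Polynomial.eval_map,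
    descPochhammer_map]

theorem descPochhammer_eval_mul_eval_sub (a b : ℕ) (p : R) :
    (descPochhammer R a).eval p * (descPochhammer R b).eval (p - a) =
      (descPochhammer R (a + b)).eval p := by
  rw [← descPochhammer_mul, Polynomial.eval_mul, Polynomial.eval_comp, Polynomial.eval_sub,
    Polynomial.eval_X, Polynomial.eval_natCast]

theorem descPochhammer_eval_add (p q : R) (n : ℕ) :
    (descPochhammer R n).eval (p + q) = ∑ ij ∈ antidiagonal n,
      n.choose ij.1 * ((descPochhammer R ij.1).eval p * (descPochhammer R ij.2).eval q) := by
  simpa only [descPochhammer_int_smeval_eq_eval] using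
    Ring.descPochhammer_smeval_add n (Commute.all p q)

theorem descPochhammer_eval_sum {ι : Type*} [DecidableEq ι] (s : Finset ι) (p : ι → R)
    (n : ℕ) :
    (descPochhammer R n).eval (∑ i ∈ s, p i) =
      ∑ m ∈ s.piAntidiag n,
        Nat.multinomial s m * ∏ i ∈ s, (descPochhammer R (m i)).eval (p i) := by
  induction s using Finset.cons_induction generalizing n with
  | empty => cases n <;> simp [descPochhammer_succ_left]
  | cons a s has ih =>
    rw [sum_cons, descPochhammer_eval_add, piAntidiag_cons has, sum_disjiUnion]
    refine sum_congr rfl fun ij hij => ?_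
    rw [ih, mul_sum, mul_sum, sum_map]
    refine sum_congr rfl fun m hm => ?_
    obtain ⟨hm_sum, hm_supp⟩ := mem_piAntidiag.mp hm
    have hma : m a = 0 := by_contra fun h => has (hm_supp a h)
    have h_off : ∀ i ∈ s, (m + fun t => if t = a then ij.1 else 0) i = m i := fun i hi => by
      simp [ne_of_mem_of_not_mem hi has]
    have h_prod : ∏ i ∈ s, (descPochhammer R ((m + fun t => if t = a then ij.1 else 0) i)).eval
        (p i) = ∏ i ∈ s, (descPochhammer R (m i)).eval (p i) :=
      prod_congr rfl fun i hi => by rw [h_off i hi]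
    rw [addRightEmbedding_apply, Nat.multinomial_cons, prod_cons, Nat.multinomial_congr h_off,
      sum_congr rfl h_off, hm_sum, h_prod, Pi.add_apply, hma, if_pos rfl, zero_add,
      mem_antidiagonal.mp hij, Nat.cast_mul]
    ring

theorem prod_descPochhammer_eval_mul_descPochhammer_eval_sum_sub
    {ι : Type*} [Fintype ι] [DecidableEq ι] [Algebra ℚ R] (x : ι → R) (a : ι → ℕ) (n : ℕ) :
    (∏ i, (descPochhammer R (a i)).eval (x i)) *
        (descPochhammer R n).eval (∑ i, x i - ∑ i, (a i : R)) =
      ∑ c ∈ univ.piAntidiag (n + ∑ i, a i),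
        ((n ! : ℚ) / (∏ i, ((c i)! : ℚ)) * ∏ i, ((c i).descFactorial (a i) : ℚ)) •
          ∏ i, (descPochhammer R (c i)).eval (x i) := by
  have h_shift :
      (univ.piAntidiag n).map (addLeftEmbedding a) ⊆ univ.piAntidiag (n + ∑ i, a i) := by
    intro c hc
    obtain ⟨m, hm, rfl⟩ := mem_map.mp hc
    simp only [mem_piAntidiag, mem_univ, implies_true, and_true] at hm ⊢
    simp [sum_add_distrib, hm, add_comm]
  have h_vanish : ∀ c ∈ univ.piAntidiag (n + ∑ i, a i),
      c ∉ (univ.piAntidiag n).map (addLeftEmbedding a) →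
      ((n ! : ℚ) / (∏ i, ((c i)! : ℚ)) * ∏ i, ((c i).descFactorial (a i) : ℚ)) •
          ∏ i, (descPochhammer R (c i)).eval (x i) = 0 := by
    intro c hc hc_not
    obtain ⟨i, hi⟩ : ∃ i, c i < a i := by
      by_contra! h_le
      refine hc_not (mem_map.mpr ⟨c - a, ?_, funext fun i => Nat.add_sub_cancel' (h_le i)⟩)
      simp only [mem_piAntidiag, mem_univ, implies_true, and_true] at hc ⊢
      rw [Pi.sub_def, sum_tsub_distrib _ fun i _ => h_le i, hc, Nat.add_sub_cancel]
    rw [prod_eq_zero (f := fun i => ((c i).descFactorial (a i) : ℚ)) (mem_univ i)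
      (by exact_mod_cast Nat.descFactorial_eq_zero_iff_lt.mpr hi), mul_zero, zero_smul]
  rw [← sum_subset h_shift h_vanish, sum_map, ← sum_sub_distrib, descPochhammer_eval_sum,
    mul_sum]
  refine sum_congr rfl fun m hm => ?_
  simp only [addLeftEmbedding_apply, Pi.add_apply]
  rw [← (mem_piAntidiag.mp hm).1, ← Nat.cast_multinomial_eq_div_mul_prod_descFactorial,
    Nat.cast_smul_eq_nsmul, nsmul_eq_mul, mul_left_comm, ← prod_mul_distrib]
  simp only [descPochhammer_eval_mul_eval_sub]

theorem prod_Ioi_sub_eq_sum_sign_smul_prod_descPochhammer_eval [Nontrivial R]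
    [NoZeroDivisors R] {k : ℕ} (v : Fin k → R) :
    ∏ i, ∏ j ∈ Ioi i, (v j - v i) =
      ∑ σ : Equiv.Perm (Fin k), Equiv.Perm.sign σ • ∏ i, (descPochhammer R (σ i)).eval (v i) := by
  rw [← Matrix.det_vandermonde,
    Matrix.det_eval_matrixOfPolynomials_eq_det_vandermonde v (fun j => descPochhammer R j)
      (fun j => descPochhammer_natDegree R j) (fun j => monic_descPochhammer R j),
    ← Matrix.det_transpose, Matrix.det_apply]
  rfl

end DescPochhammer

theorem fallFac_eq_descPochhammer_eval {k : ℕ} (p : MvPolynomial (Fin k) ℚ) (m : ℕ) :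
    fallFac p m = (descPochhammer _ m).eval p :=
  (descPochhammer_eval_eq_prod_range m p).symm

theorem stmt_5_general (k n : ℕ) :
    (∏ p ∈ Finset.univ.filter (fun p : Fin k × Fin k => p.1 < p.2), (X p.2 - X p.1)) *
        fallFac ((∑ i : Fin k, X i) - ((k * (k - 1) / 2 : ℕ) : MvPolynomial (Fin k) ℚ)) n =
      ∑ c ∈ (Fintype.piFinset fun _ : Fin k => Finset.range (n + k * (k - 1) / 2 + 1)).filter
          (fun c => ∑ i, c i = n + k * (k - 1) / 2),
        C ((n.factorial : ℚ) / (∏ i, ((c i).factorial : ℚ)) *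
            ∏ p ∈ Finset.univ.filter (fun p : Fin k × Fin k => p.1 < p.2),
              ((c p.2 : ℚ) - (c p.1 : ℚ))) *
          ∏ i, fallFac (X i) (c i) := by
  have h_sum_perm (σ : Equiv.Perm (Fin k)) : ∑ i, (σ i : ℕ) = k * (k - 1) / 2 := by
    rw [Equiv.sum_comp σ (fun i => (i : ℕ)), Fin.sum_univ_eq_sum_range (fun i => i),
      sum_range_id]
  have h_expand (σ : Equiv.Perm (Fin k)) :=
    prod_descPochhammer_eval_mul_descPochhammer_eval_sum_sub (X (R := ℚ)) (fun i => (σ i : ℕ)) n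
  simp only [← Nat.cast_sum, h_sum_perm] at h_expand
  rw [filter_piFinset_range_sum_eq_piAntidiag,
    prod_filter_lt_eq_prod_prod_Ioi (fun i j => (X j - X i : MvPolynomial (Fin k) ℚ)),
    prod_Ioi_sub_eq_sum_sign_smul_prod_descPochhammer_eval, sum_mul]
  simp only [fallFac_eq_descPochhammer_eval, smul_mul_assoc, h_expand, smul_sum]
  rw [sum_comm]
  refine sum_congr rfl fun c _ => ?_
  rw [prod_filter_lt_eq_prod_prod_Ioi (fun i j => ((c j : ℚ) - c i)),
    prod_Ioi_sub_eq_sum_sign_smul_prod_descPochhammer_eval, C_mul']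
  simp only [descPochhammer_eval_eq_descFactorial, mul_sum, sum_smul, mul_smul_comm, smul_assoc]

/-- `∏_{i<j}(x_j - x_i) · (∑ xᵢ - k(k-1)/2)^{(n)}
  = ∑_{n₁+⋯+n_k = n + k(k-1)/2} (n!/∏ nᵢ!) ∏_{i<j}(n_j-n_i) ∏ᵢ xᵢ^{(nᵢ)}`. -/
theorem stmt_5 (k n : ℕ) (hk : 0 < k) :
    (∏ p ∈ Finset.univ.filter (fun p : Fin k × Fin k => p.1 < p.2), (X p.2 - X p.1)) *
        fallFac ((∑ i : Fin k, X i) - ((k * (k - 1) / 2 : ℕ) : MvPolynomial (Fin k) ℚ)) n =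
      ∑ c ∈ (Fintype.piFinset fun _ : Fin k => Finset.range (n + k * (k - 1) / 2 + 1)).filter
          (fun c => ∑ i, c i = n + k * (k - 1) / 2),
        C ((n.factorial : ℚ) / (∏ i, ((c i).factorial : ℚ)) *
            ∏ p ∈ Finset.univ.filter (fun p : Fin k × Fin k => p.1 < p.2),
              ((c p.2 : ℚ) - (c p.1 : ℚ))) *
          ∏ i, fallFac (X i) (c i) :=
  stmt_5_general k n
end

section
/- The coefficient of the monomial ∏_{i=1}^k x_i^{n_i} in the polynomial ∏_{1≤i<j≤k}(x_j - x_i) · (x_1+...+x_k)^n equals (n!/∏_i n_i!) · ∏_{i<j}(n_j - n_i), whenever n_1,...,n_k are nonnegative integers with ∑ n_i = n + k(k-1)/2. -/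
/-!
Expand the Vandermonde product as the determinant `∑_σ sgn σ ∏ᵢ xᵢ ^ σ(i)`. The coefficient of
`x ^ c` in `x ^ σ · (x₁ + ⋯ + x_k) ^ n` is the multinomial coefficient
`n! / ∏ᵢ (cᵢ - σ(i))! = n! / ∏ᵢ cᵢ! · ∏ᵢ cᵢ(cᵢ - 1)⋯(cᵢ - σ(i) + 1)`, and this also holds when
some `σ(i) > cᵢ`, both sides being `0`. Summing over `σ` leaves `n! / ∏ᵢ cᵢ!` times the determinant
of the falling factorials `cᵢ(cᵢ - 1)⋯(cᵢ - j + 1)`, which is the Vandermonde determinant of the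
`cᵢ`, i.e. `∏_{i<j} (c_j - c_i)`.
-/

open MvPolynomial Finset

open scoped Nat

theorem Finset.prod_filter_fst_lt_snd {k : ℕ} {M : Type*} [CommMonoid M] (f : Fin k → Fin k → M) :
    ∏ p ∈ univ.filter (fun p : Fin k × Fin k => p.1 < p.2), f p.1 p.2 =
      ∏ i, ∏ j ∈ Ioi i, f i j := by
  rw [prod_sigma']
  exact prod_nbij' (fun p => ⟨p.1, p.2⟩) (fun x => (x.1, x.2))
    (by simp) (by simp) (by simp) (by simp) (by simp)

section Vandermonde

open Equiv

variable {R : Type*} [CommRing R] {k : ℕ}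

theorem prod_Ioi_sub_eq_sum_perm_sign_smul (v : Fin k → R) :
    ∏ i, ∏ j ∈ Ioi i, (v j - v i) = ∑ σ : Perm (Fin k), Perm.sign σ • ∏ i, v i ^ (σ i : ℕ) := by
  rw [← Matrix.det_vandermonde, ← Matrix.det_transpose, Matrix.det_apply]
  simp [Matrix.vandermonde]

/- Replacing the columns `x ^ j` of the Vandermonde matrix by the falling factorials
`x (x - 1) ⋯ (x - j + 1)` is a unitriangular column operation. -/
theorem prod_Ioi_natCast_sub_eq_sum_perm_sign_smul_descFactorial [IsDomain R] (c : Fin k → ℕ) :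
    ∏ i, ∏ j ∈ Ioi i, ((c j : R) - c i) =
      ∑ σ : Perm (Fin k), Perm.sign σ • ∏ i, ((c i).descFactorial (σ i) : R) := by
  rw [← Matrix.det_vandermonde,
    Matrix.det_eval_matrixOfPolynomials_eq_det_vandermonde _ (fun j => descPochhammer R j)
      (fun i => descPochhammer_natDegree _ _) (fun i => monic_descPochhammer _ _),
    ← Matrix.det_transpose, Matrix.det_apply]
  simp [descPochhammer_eval_eq_descFactorial]

end Vandermonde

section Coefficients

variable {ι K : Type*} [Fintype ι]

theorem MvPolynomial.prod_X_pow_univ [CommSemiring K] (d : ι → ℕ) :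
    ∏ i, (X i : MvPolynomial ι K) ^ d i = monomial (Finsupp.equivFunOnFinite.symm d) 1 := by
  classical
  rw [prod_X_pow]
  congr
  ext
  simp

theorem Finsupp.multinomial_mul_prod_factorial (m : ι →₀ ℕ) :
    m.multinomial * ∏ i, (m i)! = (∑ i, m i)! := by
  classical
  rw [multinomial_eq_of_support_subset (subset_univ _), mul_comm, Nat.multinomial_spec]

theorem Finsupp.cast_multinomial_sub [Field K] [CharZero K] {c d : ι →₀ ℕ} (h : d ≤ c) :
    ((c - d).multinomial : K) =
      (∑ i, (c - d) i)! / (∏ i, ((c i)! : K)) * ∏ i, ((c i).descFactorial (d i) : K) := by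
  have hfac : ∏ i, ((c i)! : K) =
      (∏ i, ((c i - d i)! : K)) * ∏ i, ((c i).descFactorial (d i) : K) := by
    rw [← prod_mul_distrib]
    exact Finset.prod_congr rfl fun i _ => by
      exact_mod_cast (Nat.factorial_mul_descFactorial (h i)).symm
  have hfac_ne : ∏ i, ((c i)! : K) ≠ 0 :=
    Finset.prod_ne_zero_iff.2 fun i _ => Nat.cast_ne_zero.2 (Nat.factorial_ne_zero _)
  rw [div_mul_eq_mul_div, eq_div_iff hfac_ne, hfac, ← (c - d).multinomial_mul_prod_factorial]
  push_cast
  simp only [Pi.sub_apply]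
  ring

theorem MvPolynomial.coeff_prod_X_pow_mul_sum_X_pow [Field K] [CharZero K] (d c : ι → ℕ) {n : ℕ}
    (h : ∑ i, d i + n = ∑ i, c i) :
    coeff (Finsupp.equivFunOnFinite.symm c)
        ((∏ i, X i ^ d i) * (∑ i, X i) ^ n : MvPolynomial ι K) =
      n ! / (∏ i, ((c i)! : K)) * ∏ i, ((c i).descFactorial (d i) : K) := by
  classical
  rw [prod_X_pow_univ, coeff_monomial_mul', one_mul, coeff_sum_X_pow_of_fintype]
  by_cases hle : ∀ i, d i ≤ c i
  · have hsum : ∑ i, (c i - d i) = n := by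
      rw [sum_tsub_distrib _ fun i _ => hle i]
      omega
    have hle' : Finsupp.equivFunOnFinite.symm d ≤ Finsupp.equivFunOnFinite.symm c := hle
    have hsum' :
        ∑ i, (Finsupp.equivFunOnFinite.symm c - Finsupp.equivFunOnFinite.symm d) i = n := by
      simpa using hsum
    rw [if_pos hle', Finsupp.sum_fintype _ _ fun _ => rfl, if_pos hsum',
      Finsupp.cast_multinomial_sub hle', hsum']
    rfl
  · obtain ⟨i, hi⟩ := not_forall.1 hle
    have hdesc : (c i).descFactorial (d i) = 0 := Nat.descFactorial_eq_zero_iff_lt.2 (not_le.1 hi)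
    have hzero : ∏ i, ((c i).descFactorial (d i) : K) = 0 :=
      prod_eq_zero (mem_univ i) (by simp [hdesc])
    rw [if_neg fun h' => hi (h' i), hzero, mul_zero]

end Coefficients

theorem stmt_7_general (k n : ℕ) (c : Fin k → ℕ)
    (hc : ∑ i, c i = n + k * (k - 1) / 2) :
    MvPolynomial.coeff (Finsupp.equivFunOnFinite.symm c)
        ((∏ p ∈ Finset.univ.filter (fun p : Fin k × Fin k => p.1 < p.2), (X p.2 - X p.1)) *
          (∑ i : Fin k, X i) ^ n : MvPolynomial (Fin k) ℚ) =
      (n.factorial : ℚ) / (∏ i, ((c i).factorial : ℚ)) *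
        ∏ p ∈ Finset.univ.filter (fun p : Fin k × Fin k => p.1 < p.2),
          ((c p.2 : ℚ) - (c p.1 : ℚ)) := by
  have hdeg (σ : Equiv.Perm (Fin k)) : ∑ i, (σ i : ℕ) + n = ∑ i, c i := by
    rw [Equiv.sum_comp σ (fun i => (i : ℕ)), Fin.sum_univ_eq_sum_range (fun i => i), sum_range_id,
      hc, add_comm]
  rw [prod_filter_fst_lt_snd (fun i j => (X j - X i : MvPolynomial (Fin k) ℚ)),
    prod_filter_fst_lt_snd (fun i j => ((c j : ℚ) - c i)),
    prod_Ioi_sub_eq_sum_perm_sign_smul, sum_mul, coeff_sum,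
    prod_Ioi_natCast_sub_eq_sum_perm_sign_smul_descFactorial, mul_sum]
  refine sum_congr rfl fun σ _ => ?_
  rw [smul_mul_assoc, coeff_smul, coeff_prod_X_pow_mul_sum_X_pow _ _ (hdeg σ), mul_smul_comm]

/-- The coefficient of `∏ᵢ xᵢ^{nᵢ}` in `∏_{i<j}(x_j - x_i) · (x₁+⋯+x_k)^n` equals
`(n!/∏ nᵢ!) · ∏_{i<j}(n_j - n_i)`, when `∑ nᵢ = n + k(k-1)/2`. -/
theorem stmt_7 (k n : ℕ) (hk : 0 < k) (c : Fin k → ℕ)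
    (hc : ∑ i, c i = n + k * (k - 1) / 2) :
    MvPolynomial.coeff (Finsupp.equivFunOnFinite.symm c)
        ((∏ p ∈ Finset.univ.filter (fun p : Fin k × Fin k => p.1 < p.2), (X p.2 - X p.1)) *
          (∑ i : Fin k, X i) ^ n : MvPolynomial (Fin k) ℚ) =
      (n.factorial : ℚ) / (∏ i, ((c i).factorial : ℚ)) *
        ∏ p ∈ Finset.univ.filter (fun p : Fin k × Fin k => p.1 < p.2),
          ((c p.2 : ℚ) - (c p.1 : ℚ)) :=
  stmt_7_general k n c hc
end

section
/- Hook length formula: the number of standard Young tableaux of a given shape λ with n cells equals n! divided by the product of the hook lengths h(□) over all cells □ of λ. -/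
open Finset

/-- The hook length of the cell `(i, j)` of a Young diagram `μ` (arm + leg + 1). -/
def hookLength (μ : YoungDiagram) (i j : ℕ) : ℕ :=
  (μ.rowLen i - j) + (μ.colLen j - i) - 1

/-- A standard Young tableau of shape `μ` with `n = μ.card` cells: a filling of the cells
with the numbers `1, …, n`, each used exactly once, strictly increasing along rows and
columns (and `0` outside the diagram, to fix the values off the shape). -/
def SYT (μ : YoungDiagram) (n : ℕ) : Type :=
  { T : ℕ × ℕ → ℕ //
      Set.BijOn T (μ : Set (ℕ × ℕ)) (Set.Icc 1 n) ∧
      (∀ i j : ℕ, (i, j + 1) ∈ μ → T (i, j) < T (i, j + 1)) ∧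
      (∀ i j : ℕ, (i + 1, j) ∈ μ → T (i, j) < T (i + 1, j)) ∧
      (∀ c : ℕ × ℕ, c ∉ μ → T c = 0) }

/-!
Induction on the number of cells. The largest entry of a standard tableau sits in a corner, so
the number `f μ` of tableaux is the sum of `f` over the diagrams obtained by removing one corner.

For the hook product `H μ` use the `β`-numbers `βᵢ = μᵢ + M - 1 - i` (`i < M`, `M` rows): the
hook lengths of row `i` and the gaps `βᵢ - βₖ`, `i < k < M`, are exactly `1, …, βᵢ`, whence
Frobenius' form `H μ · ∏_{i<k} (βᵢ - βₖ) = ∏ βᵢ!`. Removing the corner of row `r` lowers `β_r` by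
one, so `H μ / H (μ ∖ corner) = β_r ∏_{j ≠ r} (β_r - β_j - 1) / (β_r - β_j)`; the factor for
`j = r + 1` vanishes when row `r` has no corner. Summed over all `r < M` these weights give
`∑ β_r - C(M, 2) = |μ|`, by partial fractions (Lagrange interpolation) applied to a polynomial
of degree `< M`. Hence `|μ|! / H μ` satisfies the same recursion as `f μ`.
-/

open scoped Nat

section PartialFractions

open Polynomial Lagrange

variable {ι F : Type*} [Field F]

/-- At the node `v r` it takes the value `-v r ∏_{j ≠ r} (v r - v j - 1)`, and it has degree
`< #s`: partial fractions then give `sum_mul_prod_sub_one_div_sub`. -/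
noncomputable def cornerWeightPoly (s : Finset ι) (v : ι → F) : F[X] :=
  X * nodal s (fun j => v j + 1) - (X - C (#s : F)) * nodal s v

variable [DecidableEq ι]

lemma cornerWeightPoly_insert (s : Finset ι) (v : ι → F) {a : ι} (ha : a ∉ s) :
    cornerWeightPoly (insert a s) v =
      cornerWeightPoly s v * (X - C (v a + 1)) + C ((#s : F) - v a) * nodal s v := by
  rw [cornerWeightPoly, cornerWeightPoly, nodal_insert_eq_nodal ha, nodal_insert_eq_nodal ha,
    card_insert_of_notMem ha]
  simp only [C_add, C_1, Nat.cast_add, Nat.cast_one, C_sub]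
  ring

lemma degree_cornerWeightPoly_lt (s : Finset ι) (v : ι → F) :
    (cornerWeightPoly s v).degree < #s := by
  induction s using Finset.induction_on with
  | empty => simp [cornerWeightPoly]
  | @insert a s ha ih =>
    rw [cornerWeightPoly_insert s v ha, card_insert_of_notMem ha, Nat.cast_add, Nat.cast_one]
    refine (degree_add_le _ _).trans_lt (max_lt ?_ ?_)
    · rw [degree_mul, degree_X_sub_C]
      exact WithBot.add_lt_add_right WithBot.one_ne_bot ih
    · refine (degree_mul_le _ _).trans_lt ?_
      rw [degree_nodal]
      calc (C ((#s : F) - v a)).degree + #s ≤ 0 + #s := by gcongr; exact degree_C_le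
        _ < #s + 1 := by rw [zero_add]; exact_mod_cast Nat.lt_succ_self _

lemma coeff_cornerWeightPoly (s : Finset ι) (v : ι → F) :
    (cornerWeightPoly s v).coeff (#s - 1) = ((#s).choose 2 : F) - ∑ j ∈ s, v j := by
  induction s using Finset.induction_on with
  | empty => simp [cornerWeightPoly]
  | @insert a s ha ih =>
    rw [cornerWeightPoly_insert s v ha, card_insert_of_notMem ha, sum_insert ha,
      Nat.add_sub_cancel, coeff_add, coeff_C_mul, ← natDegree_nodal (v := v),
      nodal_monic.coeff_natDegree, natDegree_nodal, mul_one]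
    rcases s.eq_empty_or_nonempty with rfl | hs
    · simp [cornerWeightPoly]
    obtain ⟨k, hk⟩ : ∃ k, #s = k + 1 := ⟨#s - 1, by have := hs.card_pos; omega⟩
    have htop : (cornerWeightPoly s v).coeff (k + 1) = 0 :=
      coeff_eq_zero_of_degree_lt (hk ▸ degree_cornerWeightPoly_lt s v)
    rw [hk, Nat.add_sub_cancel] at ih
    rw [hk, mul_sub, coeff_sub, coeff_mul_X, coeff_mul_C, htop, ih,
      Nat.choose_succ_succ' (k + 1) 1, Nat.choose_one_right]
    push_cast
    ring

theorem sum_mul_prod_sub_one_div_sub (s : Finset ι) (v : ι → F) (hv : Set.InjOn v s) :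
    ∑ r ∈ s, v r * ∏ j ∈ s.erase r, ((v r - v j - 1) / (v r - v j)) =
      ∑ r ∈ s, v r - ((#s).choose 2 : F) := by
  have heval : ∀ r ∈ s, (cornerWeightPoly s v).eval (v r) / ∏ j ∈ s.erase r, (v r - v j) =
      -(v r * ∏ j ∈ s.erase r, ((v r - v j - 1) / (v r - v j))) := by
    intro r hr
    rw [cornerWeightPoly, eval_sub, eval_mul, eval_mul, eval_X, eval_nodal_at_node hr, eval_nodal,
      ← mul_prod_erase s _ hr, prod_div_distrib]
    simp_rw [sub_add_eq_sub_sub]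
    ring
  have hpf := Lagrange.coeff_eq_sum hv (degree_cornerWeightPoly_lt s v)
  rw [coeff_cornerWeightPoly, sum_congr rfl heval, sum_neg_distrib] at hpf
  linear_combination hpf

end PartialFractions

section DiffProd

variable {R : Type*} [CommRing R]

def diffProd (u : ℕ → R) (M : ℕ) : R := ∏ i ∈ range M, ∏ j ∈ Ioo i M, (u i - u j)

lemma diffProd_eq_mul_prod_erase (u : ℕ → R) {M r : ℕ} (hr : r < M) :
    diffProd u M = (-1) ^ r * (∏ j ∈ (range M).erase r, (u r - u j)) *
      ∏ i ∈ (range M).erase r, ∏ j ∈ (Ioo i M).erase r, (u i - u j) := by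
  have hinner : ∀ i ∈ (range M).erase r, ∏ j ∈ Ioo i M, (u i - u j) =
      (if i < r then u i - u r else 1) * ∏ j ∈ (Ioo i M).erase r, (u i - u j) := by
    intro i _
    split_ifs with h
    · exact (mul_prod_erase _ _ (mem_Ioo.mpr ⟨h, hr⟩)).symm
    · rw [one_mul, erase_eq_of_notMem (fun hri => h (mem_Ioo.mp hri).1)]
  have hlt : ((range M).erase r).filter (· < r) = range r := by
    ext i
    simp only [mem_filter, mem_erase, mem_range]
    omega
  have hneg : ∏ i ∈ range r, (u i - u r) = (-1) ^ r * ∏ i ∈ range r, (u r - u i) := by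
    simp only [← neg_sub (u r), prod_neg, card_range]
  have hsplit : ∏ j ∈ (range M).erase r, (u r - u j) =
      (∏ j ∈ range r, (u r - u j)) * ∏ j ∈ Ioo r M, (u r - u j) := by
    rw [← prod_union (disjoint_left.mpr fun i hi hi' => by
      simp only [mem_range, mem_Ioo] at hi hi'; omega)]
    congr 1
    ext i
    simp only [mem_erase, mem_range, mem_union, mem_Ioo]
    omega
  rw [diffProd, ← mul_prod_erase _ _ (mem_range.mpr hr), prod_congr rfl hinner, prod_mul_distrib,
    ← prod_filter, hlt, hneg, hsplit]
  ring

lemma diffProd_update_mul (u : ℕ → R) {M r : ℕ} (hr : r < M) :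
    diffProd (Function.update u r (u r - 1)) M * ∏ j ∈ (range M).erase r, (u r - u j) =
      diffProd u M * ∏ j ∈ (range M).erase r, (u r - u j - 1) := by
  have hupd : ∀ i ∈ (range M).erase r, Function.update u r (u r - 1) i = u i :=
    fun i hi => Function.update_of_ne (ne_of_mem_erase hi) _ _
  rw [diffProd_eq_mul_prod_erase _ hr, diffProd_eq_mul_prod_erase _ hr, Function.update_self,
    prod_congr rfl fun j hj => by rw [hupd j hj],
    prod_congr rfl fun i hi => prod_congr rfl fun j hj => by
      rw [hupd i hi, hupd j (mem_erase.mpr ⟨ne_of_mem_erase hj, mem_range.mpr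
        ((mem_Ioo.mp (mem_of_mem_erase hj)).2)⟩)]]
  simp only [sub_right_comm]
  ring

lemma diffProd_ne_zero [IsDomain R] {u : ℕ → R} {M : ℕ} (hu : Set.InjOn u (range M)) :
    diffProd u M ≠ 0 :=
  prod_ne_zero_iff.mpr fun _ hi => prod_ne_zero_iff.mpr fun _ hj => sub_ne_zero.mpr fun h =>
    (mem_Ioo.mp hj).1.ne (hu hi (mem_range.mpr (mem_Ioo.mp hj).2) h)

end DiffProd

lemma prod_mul_prod_eq_factorial {α β : Type*} {s : Finset α} {t : Finset β} {f : α → ℕ}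
    {g : β → ℕ} {N : ℕ} (hf : Set.InjOn f s) (hg : Set.InjOn g t)
    (hfs : ∀ a ∈ s, f a ∈ Icc 1 N) (hgt : ∀ b ∈ t, g b ∈ Icc 1 N)
    (hfg : ∀ a ∈ s, ∀ b ∈ t, f a ≠ g b) (hcard : #s + #t = N) :
    (∏ a ∈ s, f a) * ∏ b ∈ t, g b = N ! := by
  classical
  have hdisj : Disjoint (s.image f) (t.image g) := by
    simp only [disjoint_left, mem_image]
    rintro _ ⟨a, ha, rfl⟩ ⟨b, hb, hab⟩
    exact hfg a ha b hb hab.symm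
  have hunion : s.image f ∪ t.image g = Icc 1 N := by
    refine eq_of_subset_of_card_le (union_subset ?_ ?_) ?_
    · simpa only [image_subset_iff] using hfs
    · simpa only [image_subset_iff] using hgt
    · rw [card_union_of_disjoint hdisj, card_image_of_injOn hf, card_image_of_injOn hg,
        Nat.card_Icc, hcard, Nat.add_sub_cancel]
  calc (∏ a ∈ s, f a) * ∏ b ∈ t, g b = ∏ x ∈ s.image f ∪ t.image g, x := by
        rw [prod_union hdisj, prod_image hf, prod_image hg]
    _ = N ! := by rw [hunion, ← Finset.Ico_add_one_right_eq_Icc, prod_Ico_id_eq_factorial]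

namespace YoungDiagram

variable {μ : YoungDiagram} {M : ℕ}

lemma mem_iff_fst_lt_and_snd_lt_rowLen (hM : μ.colLen 0 ≤ M) {c : ℕ × ℕ} :
    c ∈ μ ↔ c.1 < M ∧ c.2 < μ.rowLen c.1 :=
  ⟨fun hc => ⟨(mem_iff_lt_colLen.mp (μ.up_left_mem le_rfl (Nat.zero_le c.2) hc)).trans_le hM,
    mem_iff_lt_rowLen.mp hc⟩, fun hc => mem_iff_lt_rowLen.mpr hc.2⟩

@[to_additive]
lemma prod_cells_eq_prod_range {β : Type*} [CommMonoid β] (hM : μ.colLen 0 ≤ M)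
    (f : ℕ → ℕ → β) :
    ∏ c ∈ μ.cells, f c.1 c.2 = ∏ i ∈ range M, ∏ j ∈ range (μ.rowLen i), f i j :=
  prod_finset_product' _ _ _ fun _ => by
    rw [mem_cells, mem_iff_fst_lt_and_snd_lt_rowLen hM, mem_range, mem_range]

lemma card_eq_sum_rowLen (hM : μ.colLen 0 ≤ M) : μ.card = ∑ i ∈ range M, μ.rowLen i := by
  rw [YoungDiagram.card, card_eq_sum_ones, sum_cells_eq_sum_range hM fun _ _ => 1]
  simp

end YoungDiagram

open YoungDiagram

lemma hookLength_pos {μ : YoungDiagram} {i j : ℕ} (h : (i, j) ∈ μ) : 0 < hookLength μ i j := by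
  have := mem_iff_lt_rowLen.mp h
  have := mem_iff_lt_colLen.mp h
  unfold hookLength
  omega

lemma hookLength_strictAntiOn (μ : YoungDiagram) (i : ℕ) :
    StrictAntiOn (hookLength μ i) (Set.Iio (μ.rowLen i)) := by
  intro j _ j' hj' hjj
  have := μ.colLen_anti j j' hjj.le
  have := mem_iff_lt_colLen.mp (mem_iff_lt_rowLen.mpr hj')
  simp only [Set.mem_Iio] at hj'
  unfold hookLength
  omega

/-- `β`-numbers of `μ` regarded as a diagram with `M` (possibly empty) rows; for
`M = μ.colLen 0` they are the hook lengths of the first column. -/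
def betaNumber (μ : YoungDiagram) (M i : ℕ) : ℕ := μ.rowLen i + (M - 1 - i)

lemma betaNumber_strictAntiOn (μ : YoungDiagram) (M : ℕ) :
    StrictAntiOn (betaNumber μ M) (Set.Iio M) := by
  intro i _ k hk hik
  have := μ.rowLen_anti i k hik.le
  simp only [Set.mem_Iio] at hk
  unfold betaNumber
  omega

lemma betaNumber_lt_of_lt (μ : YoungDiagram) {M i k : ℕ} (hik : i < k) (hk : k < M) :
    betaNumber μ M k < betaNumber μ M i :=
  betaNumber_strictAntiOn μ M (hik.trans hk) hk hik

/-- Equality would mean `colLen j - 1 - k = j - rowLen k` (in `ℤ`), but the two sides have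
opposite signs according as `(k, j) ∈ μ` or not. -/
lemma hookLength_ne_betaNumber_sub {μ : YoungDiagram} {M i j k : ℕ} (hj : j < μ.rowLen i)
    (hik : i < k) (hk : k < M) : hookLength μ i j ≠ betaNumber μ M i - betaNumber μ M k := by
  have := mem_iff_lt_colLen.mp (mem_iff_lt_rowLen.mpr hj)
  have := μ.rowLen_anti i k hik.le
  unfold hookLength betaNumber
  by_cases hkj : (k, j) ∈ μ
  · have := mem_iff_lt_colLen.mp hkj
    have := mem_iff_lt_rowLen.mp hkj
    omega
  · have := mt mem_iff_lt_colLen.mpr hkj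
    have := mt mem_iff_lt_rowLen.mpr hkj
    omega

/-- The hook lengths of row `i` and the gaps `βᵢ - βₖ`, `i < k < M`, together make up
`{1, …, βᵢ}`. -/
lemma prod_hookLength_row_mul_prod_sub_betaNumber {μ : YoungDiagram} {M i : ℕ}
    (hM : μ.colLen 0 ≤ M) :
    (∏ j ∈ range (μ.rowLen i), hookLength μ i j) *
      ∏ k ∈ Ioo i M, (betaNumber μ M i - betaNumber μ M k) = (betaNumber μ M i)! := by
  refine prod_mul_prod_eq_factorial ?_ ?_ ?_ ?_ ?_ ?_
  · simpa only [coe_range] using (hookLength_strictAntiOn μ i).injOn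
  · intro k hk k' hk' h
    simp only [coe_Ioo, Set.mem_Ioo] at hk hk'
    have := betaNumber_lt_of_lt μ hk.1 hk.2
    have := betaNumber_lt_of_lt μ hk'.1 hk'.2
    exact (betaNumber_strictAntiOn μ M).injOn hk.2 hk'.2 (by simp only at h; omega)
  · intro j hj
    rw [mem_range] at hj
    have := mem_iff_lt_colLen.mp (mem_iff_lt_rowLen.mpr hj)
    have := μ.colLen_anti 0 j (Nat.zero_le j)
    rw [mem_Icc]
    unfold hookLength betaNumber
    omega
  · intro k hk
    rw [mem_Ioo] at hk
    have := betaNumber_lt_of_lt μ hk.1 hk.2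
    rw [mem_Icc]
    omega
  · exact fun j hj k hk =>
      hookLength_ne_betaNumber_sub (mem_range.mp hj) (mem_Ioo.mp hk).1 (mem_Ioo.mp hk).2
  · rw [card_range, Nat.card_Ioo]
    unfold betaNumber
    omega

def hookProd (μ : YoungDiagram) : ℕ := ∏ c ∈ μ.cells, hookLength μ c.1 c.2

theorem hookProd_mul_diffProd_betaNumber {μ : YoungDiagram} {M : ℕ} (hM : μ.colLen 0 ≤ M) :
    (hookProd μ : ℚ) * diffProd (fun i => (betaNumber μ M i : ℚ)) M =
      ∏ i ∈ range M, ((betaNumber μ M i)! : ℚ) := by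
  have hsub : ∀ i, ∀ k ∈ Ioo i M,
      ((betaNumber μ M i - betaNumber μ M k : ℕ) : ℚ) = betaNumber μ M i - betaNumber μ M k :=
    fun _ _ hk => Nat.cast_sub (betaNumber_lt_of_lt μ (mem_Ioo.mp hk).1 (mem_Ioo.mp hk).2).le
  have hnat : hookProd μ * ∏ i ∈ range M, ∏ k ∈ Ioo i M, (betaNumber μ M i - betaNumber μ M k) =
      ∏ i ∈ range M, (betaNumber μ M i)! := by
    rw [hookProd, prod_cells_eq_prod_range hM, ← prod_mul_distrib]
    exact prod_congr rfl fun _ _ => prod_hookLength_row_mul_prod_sub_betaNumber hM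
  rw [diffProd, ← prod_congr rfl fun i _ => prod_congr rfl (hsub i)]
  exact_mod_cast hnat

namespace YoungDiagram

variable {μ : YoungDiagram} {r : ℕ}

def IsCornerRow (μ : YoungDiagram) (r : ℕ) : Prop := μ.rowLen (r + 1) < μ.rowLen r

instance (μ : YoungDiagram) (r : ℕ) : Decidable (μ.IsCornerRow r) :=
  inferInstanceAs (Decidable (_ < _))

def corner (μ : YoungDiagram) (r : ℕ) : ℕ × ℕ := (r, μ.rowLen r - 1)

lemma corner_mem (hr : μ.IsCornerRow r) : μ.corner r ∈ μ :=
  mem_iff_lt_rowLen.mpr (by unfold IsCornerRow at hr; omega)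

lemma lt_colLen_of_isCornerRow (hr : μ.IsCornerRow r) : r < μ.colLen 0 :=
  mem_iff_lt_colLen.mp (μ.up_left_mem le_rfl (Nat.zero_le _) (corner_mem hr))

lemma eq_corner_of_corner_le (hr : μ.IsCornerRow r) {c : ℕ × ℕ} (hc : c ∈ μ)
    (h : μ.corner r ≤ c) : c = μ.corner r := by
  obtain ⟨h1, h2⟩ := Prod.mk_le_mk.mp h
  have := mem_iff_lt_rowLen.mp hc
  have := μ.rowLen_anti r c.1 h1
  have : c.1 = r := by
    by_contra hne
    have := μ.rowLen_anti (r + 1) c.1 (by omega)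
    unfold IsCornerRow at hr
    omega
  ext <;> simp only [corner] <;> omega

/-- Junk value `μ` if row `r` does not end in a corner. -/
def removeCorner (μ : YoungDiagram) (r : ℕ) : YoungDiagram :=
  if hr : μ.IsCornerRow r then
    { cells := μ.cells.erase (μ.corner r)
      isLowerSet := fun a b hba ha => by
        simp only [coe_erase, Set.mem_sdiff, mem_coe, mem_cells, Set.mem_singleton_iff] at ha ⊢
        refine ⟨μ.isLowerSet hba ha.1, fun hb => ha.2 ?_⟩
        exact eq_corner_of_corner_le hr ha.1 (hb ▸ hba) }
  else μ

lemma mem_removeCorner (hr : μ.IsCornerRow r) {c : ℕ × ℕ} :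
    c ∈ μ.removeCorner r ↔ c ∈ μ ∧ c ≠ μ.corner r := by
  rw [removeCorner, dif_pos hr, ← mem_cells, mem_erase, mem_cells, and_comm]

lemma coe_removeCorner (hr : μ.IsCornerRow r) :
    (μ.removeCorner r : Set (ℕ × ℕ)) = (μ : Set (ℕ × ℕ)) \ {μ.corner r} := by
  ext c
  exact mem_removeCorner hr

lemma card_removeCorner (hr : μ.IsCornerRow r) : (μ.removeCorner r).card + 1 = μ.card := by
  rw [YoungDiagram.card, YoungDiagram.card, removeCorner, dif_pos hr,
    card_erase_add_one ((mem_cells _).mpr (corner_mem hr))]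

lemma rowLen_removeCorner (hr : μ.IsCornerRow r) (i : ℕ) :
    (μ.removeCorner r).rowLen i = if i = r then μ.rowLen r - 1 else μ.rowLen i := by
  refine eq_of_forall_lt_iff fun j => ?_
  rw [← mem_iff_lt_rowLen, mem_removeCorner hr, mem_iff_lt_rowLen, corner]
  unfold IsCornerRow at hr
  split_ifs with h
  · simp only [h, ne_eq, Prod.ext_iff, true_and]
    omega
  · simp [Prod.ext_iff, h]

lemma colLen_removeCorner_le (hr : μ.IsCornerRow r) : (μ.removeCorner r).colLen 0 ≤ μ.colLen 0 := by
  by_contra! h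
  exact (lt_irrefl _) (mem_iff_lt_colLen.mp
    ((mem_removeCorner hr).mp (mem_iff_lt_colLen.mpr h)).1)

def cornerRows (μ : YoungDiagram) : Finset ℕ := (range (μ.colLen 0)).filter μ.IsCornerRow

lemma mem_cornerRows : r ∈ μ.cornerRows ↔ μ.IsCornerRow r := by
  rw [cornerRows, mem_filter, mem_range, and_iff_right_of_imp lt_colLen_of_isCornerRow]

end YoungDiagram

open YoungDiagram

lemma betaNumber_pos_of_isCornerRow {μ : YoungDiagram} {r : ℕ} (hr : μ.IsCornerRow r) (M : ℕ) :
    0 < betaNumber μ M r :=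
  (hr.trans_le' (Nat.zero_le _)).trans_le (Nat.le_add_right _ _)

lemma betaNumber_removeCorner {μ : YoungDiagram} {r : ℕ} (hr : μ.IsCornerRow r) (M : ℕ) :
    betaNumber (μ.removeCorner r) M =
      Function.update (betaNumber μ M) r (betaNumber μ M r - 1) := by
  have := hr.trans_le' (Nat.zero_le _)
  funext i
  rcases eq_or_ne i r with rfl | h
  · rw [Function.update_self, betaNumber, betaNumber, rowLen_removeCorner hr, if_pos rfl]
    omega
  · rw [Function.update_of_ne h, betaNumber, betaNumber, rowLen_removeCorner hr, if_neg h]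

lemma cast_betaNumber_removeCorner {μ : YoungDiagram} {r : ℕ} (hr : μ.IsCornerRow r) (M : ℕ) :
    (fun i => (betaNumber (μ.removeCorner r) M i : ℚ)) =
      Function.update (fun i => (betaNumber μ M i : ℚ)) r (betaNumber μ M r - 1) := by
  rw [betaNumber_removeCorner hr]
  funext i
  rcases eq_or_ne i r with rfl | h
  · rw [Function.update_self, Function.update_self,
      Nat.cast_sub (betaNumber_pos_of_isCornerRow hr M), Nat.cast_one]
  · rw [Function.update_of_ne h, Function.update_of_ne h]

lemma prod_factorial_betaNumber_removeCorner {μ : YoungDiagram} {r M : ℕ}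
    (hr : μ.IsCornerRow r) (hrM : r < M) :
    ∏ i ∈ range M, (betaNumber μ M i)! =
      betaNumber μ M r * ∏ i ∈ range M, (betaNumber (μ.removeCorner r) M i)! := by
  rw [betaNumber_removeCorner hr, ← mul_prod_erase _ _ (mem_range.mpr hrM),
    ← mul_prod_erase _ _ (mem_range.mpr hrM), Function.update_self, ← mul_assoc,
    Nat.mul_factorial_pred (betaNumber_pos_of_isCornerRow hr M).ne']
  congr 1
  exact prod_congr rfl fun i hi => by rw [Function.update_of_ne (ne_of_mem_erase hi)]

lemma injOn_cast_betaNumber (μ : YoungDiagram) (M : ℕ) :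
    Set.InjOn (fun i => (betaNumber μ M i : ℚ)) (range M) := fun i hi j hj h =>
  (betaNumber_strictAntiOn μ M).injOn (by simpa using hi) (by simpa using hj) (Nat.cast_injective h)

/-- `H(μ) / H(μ.removeCorner r)`, written in the `β`-numbers of `μ`. -/
def cornerWeight (μ : YoungDiagram) (r : ℕ) : ℚ :=
  let b : ℕ → ℚ := fun i => betaNumber μ (μ.colLen 0) i
  b r * ∏ j ∈ (range (μ.colLen 0)).erase r, ((b r - b j - 1) / (b r - b j))

theorem hookProd_eq_mul_cornerWeight {μ : YoungDiagram} {r : ℕ} (hr : μ.IsCornerRow r) :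
    (hookProd μ : ℚ) = hookProd (μ.removeCorner r) * cornerWeight μ r := by
  set M := μ.colLen 0
  set b : ℕ → ℚ := fun i => betaNumber μ M i
  have hrM : r < M := lt_colLen_of_isCornerRow hr
  have hμ : (hookProd μ : ℚ) * diffProd b M = ∏ i ∈ range M, ((betaNumber μ M i)! : ℚ) :=
    hookProd_mul_diffProd_betaNumber le_rfl
  have hν : (hookProd (μ.removeCorner r) : ℚ) * diffProd (Function.update b r (b r - 1)) M =
      ∏ i ∈ range M, ((betaNumber (μ.removeCorner r) M i)! : ℚ) := by
    rw [← cast_betaNumber_removeCorner hr]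
    exact hookProd_mul_diffProd_betaNumber (colLen_removeCorner_le hr)
  have hfact : ∏ i ∈ range M, ((betaNumber μ M i)! : ℚ) =
      b r * ∏ i ∈ range M, ((betaNumber (μ.removeCorner r) M i)! : ℚ) := by
    rw [show b r = (betaNumber μ M r : ℚ) from rfl]
    exact_mod_cast prod_factorial_betaNumber_removeCorner hr hrM
  have hdiff := diffProd_update_mul b hrM
  have hΔ : diffProd b M ≠ 0 := diffProd_ne_zero (injOn_cast_betaNumber μ M)
  have hP : ∏ j ∈ (range M).erase r, (b r - b j) ≠ 0 :=
    prod_ne_zero_iff.mpr fun j hj => sub_ne_zero.mpr fun h => ne_of_mem_erase hj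
      (injOn_cast_betaNumber μ M (mem_range.mpr hrM) (mem_of_mem_erase hj) h).symm
  have hw : cornerWeight μ r = b r * ((∏ j ∈ (range M).erase r, (b r - b j - 1)) /
      ∏ j ∈ (range M).erase r, (b r - b j)) := by
    rw [cornerWeight, prod_div_distrib]
  rw [hw, ← mul_div_assoc, ← mul_div_assoc, eq_div_iff hP]
  apply mul_right_cancel₀ hΔ
  linear_combination (∏ j ∈ (range M).erase r, (b r - b j)) * (hμ + hfact) -
    b r * (∏ j ∈ (range M).erase r, (b r - b j)) * hν +
    b r * (hookProd (μ.removeCorner r) : ℚ) * hdiff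

lemma sum_betaNumber {μ : YoungDiagram} {M : ℕ} (hM : μ.colLen 0 ≤ M) :
    ∑ i ∈ range M, betaNumber μ M i = μ.card + M.choose 2 := by
  have hgauss : ∑ i ∈ range M, (M - 1 - i) = M.choose 2 := by
    rw [sum_range_reflect (fun i => i) M, sum_range_id, Nat.choose_two_right]
  rw [card_eq_sum_rowLen hM, ← hgauss, ← sum_add_distrib]
  rfl

lemma cornerWeight_eq_zero {μ : YoungDiagram} {r : ℕ} (hr : r < μ.colLen 0)
    (hnc : ¬ μ.IsCornerRow r) : cornerWeight μ r = 0 := by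
  have hlen : μ.rowLen (r + 1) = μ.rowLen r :=
    le_antisymm (μ.rowLen_anti r (r + 1) r.le_succ) (not_lt.mp hnc)
  have hr1 : r + 1 < μ.colLen 0 := by
    have : 0 < μ.rowLen r := mem_iff_lt_rowLen.mp (mem_iff_lt_colLen.mpr hr)
    exact mem_iff_lt_colLen.mp (mem_iff_lt_rowLen.mpr (hlen ▸ this))
  have hβ : betaNumber μ (μ.colLen 0) r = betaNumber μ (μ.colLen 0) (r + 1) + 1 := by
    unfold betaNumber
    omega
  refine mul_eq_zero_of_right _ (prod_eq_zero (i := r + 1) ?_ ?_)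
  · exact mem_erase.mpr ⟨r.succ_ne_self, mem_range.mpr hr1⟩
  · beta_reduce
    rw [hβ, Nat.cast_succ, add_sub_cancel_left, sub_self, zero_div]

theorem sum_cornerWeight (μ : YoungDiagram) :
    ∑ r ∈ μ.cornerRows, cornerWeight μ r = μ.card := by
  rw [cornerRows,
    sum_filter_of_ne fun r hr hw => by_contra (hw ∘ cornerWeight_eq_zero (mem_range.mp hr))]
  have h := sum_mul_prod_sub_one_div_sub (range (μ.colLen 0)) _ (injOn_cast_betaNumber μ _)
  rw [card_range, ← Nat.cast_sum, sum_betaNumber le_rfl, Nat.cast_add, add_sub_cancel_right] at h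
  exact h

namespace SYT

variable {μ : YoungDiagram} {n r : ℕ}

lemma mem_Icc (T : SYT μ n) {c : ℕ × ℕ} (hc : c ∈ μ) : T.1 c ∈ Set.Icc 1 n := T.2.1.mapsTo hc

lemma eq_zero (T : SYT μ n) {c : ℕ × ℕ} (hc : c ∉ μ) : T.1 c = 0 := T.2.2.2.2 c hc

lemma ext_of_mem {T T' : SYT μ n} (h : ∀ c ∈ μ, T.1 c = T'.1 c) : T = T' :=
  Subtype.ext <| funext fun c => by
    by_cases hc : c ∈ μ
    · exact h c hc
    · rw [eq_zero T hc, eq_zero T' hc]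

instance : Finite (SYT μ n) :=
  Finite.of_injective (fun (T : SYT μ n) (c : μ.cells) => (⟨T.1 c, Nat.lt_succ_of_le
      (T.mem_Icc ((mem_cells _).mp c.2)).2⟩ : Fin (n + 1)))
    fun _ _ h => ext_of_mem fun c hc =>
      congrArg Fin.val (congrFun h ⟨c, (mem_cells _).mpr hc⟩)

lemma card_eq_one_of_card_eq_zero (hμ : μ.card = 0) : Nat.card (SYT μ 0) = 1 := by
  have hcells : μ.cells = ∅ := card_eq_zero.mp hμ
  have hempty : ∀ c, c ∉ μ := fun c hc => by simpa [hcells] using (mem_cells c).mpr hc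
  have hcoe : (μ : Set (ℕ × ℕ)) = ∅ := Set.eq_empty_of_forall_notMem hempty
  refine Nat.card_eq_one_iff_unique.mpr ⟨⟨fun T T' => ext_of_mem fun c hc => absurd hc (hempty c)⟩,
    ⟨⟨fun _ => 0, ?_, fun _ _ h => absurd h (hempty _), fun _ _ h => absurd h (hempty _),
      fun _ _ => rfl⟩⟩⟩
  rw [hcoe, Set.Icc_eq_empty (by norm_num)]
  exact Set.bijOn_empty _

section Extend

variable (hr : μ.IsCornerRow r) (T : SYT (μ.removeCorner r) n)
include hr

lemma bijOn_update_corner :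
    Set.BijOn (Function.update T.1 (μ.corner r) (n + 1)) μ (Set.Icc 1 (n + 1)) := by
  have h : Set.BijOn (Function.update T.1 (μ.corner r) (n + 1)) (μ.removeCorner r) (Set.Icc 1 n) :=
    T.2.1.congr fun c hc => (Function.update_of_ne ((mem_removeCorner hr).mp hc).2 _ _).symm
  replace h := h.insert (a := μ.corner r) (by rw [Function.update_self]; simp)
  have hdom : insert (μ.corner r) (μ.removeCorner r : Set (ℕ × ℕ)) = μ := by
    rw [coe_removeCorner hr, Set.insert_sdiff_singleton,
      Set.insert_eq_of_mem (corner_mem hr)]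
  rwa [Function.update_self, hdom,
    show insert (n + 1) (Set.Icc 1 n) = Set.Icc 1 (n + 1) by ext; simp; omega] at h

lemma update_corner_lt_update_corner {a b : ℕ × ℕ} (hb : b ∈ μ) (hab : a ≤ b) (hne : a ≠ b)
    (h : b ∈ μ.removeCorner r → T.1 a < T.1 b) :
    Function.update T.1 (μ.corner r) (n + 1) a < Function.update T.1 (μ.corner r) (n + 1) b := by
  have ha : a ≠ μ.corner r := fun ha =>
    hne (ha.trans (eq_corner_of_corner_le hr hb (ha ▸ hab)).symm)
  rw [Function.update_of_ne ha]
  by_cases hbc : b = μ.corner r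
  · rw [hbc, Function.update_self]
    have := (T.mem_Icc ((mem_removeCorner hr).mpr ⟨μ.isLowerSet hab hb, ha⟩)).2
    omega
  · rw [Function.update_of_ne hbc]
    exact h ((mem_removeCorner hr).mpr ⟨hb, hbc⟩)

def extend : SYT μ (n + 1) :=
  ⟨Function.update T.1 (μ.corner r) (n + 1), bijOn_update_corner hr T,
    fun i j h => update_corner_lt_update_corner hr T h (Prod.mk_le_mk.mpr ⟨le_rfl, j.le_succ⟩)
      (by simp) fun h' => T.2.2.1 i j h',
    fun i j h => update_corner_lt_update_corner hr T h (Prod.mk_le_mk.mpr ⟨i.le_succ, le_rfl⟩)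
      (by simp) fun h' => T.2.2.2.1 i j h',
    fun c hc => by
      rw [Function.update_of_ne (by rintro rfl; exact hc (corner_mem hr))]
      exact T.eq_zero fun h => hc ((mem_removeCorner hr).mp h).1⟩

lemma extend_apply_eq_succ_iff {c : ℕ × ℕ} : (extend hr T).1 c = n + 1 ↔ c = μ.corner r := by
  refine ⟨fun h => by_contra fun hc => ?_, fun hc => hc ▸ Function.update_self _ _ _⟩
  change Function.update T.1 (μ.corner r) (n + 1) c = n + 1 at h
  rw [Function.update_of_ne hc] at h
  by_cases hcν : c ∈ μ.removeCorner r
  · have := (T.mem_Icc hcν).2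
    omega
  · rw [T.eq_zero hcν] at h
    omega

end Extend

section Restrict

variable (T : SYT μ (n + 1)) (hr : μ.IsCornerRow r)
include hr

lemma bijOn_update_corner_zero (hT : T.1 (μ.corner r) = n + 1) :
    Set.BijOn (Function.update T.1 (μ.corner r) 0) (μ.removeCorner r) (Set.Icc 1 n) := by
  have h : Set.BijOn (Function.update T.1 (μ.corner r) 0) ((μ : Set (ℕ × ℕ)) \ {μ.corner r})
      (Set.Icc 1 (n + 1) \ {T.1 (μ.corner r)}) :=
    (T.2.1.sdiff_singleton (corner_mem hr)).congr fun c hc =>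
      (Function.update_of_ne (Set.mem_sdiff_singleton.mp hc).2 _ _).symm
  rwa [hT, show Set.Icc 1 (n + 1) \ {n + 1} = Set.Icc 1 n by ext; simp,
    ← coe_removeCorner hr] at h

lemma update_corner_zero_lt_update_corner_zero {a b : ℕ × ℕ} (hb : b ∈ μ.removeCorner r)
    (h : T.1 a < T.1 b) :
    Function.update T.1 (μ.corner r) 0 a < Function.update T.1 (μ.corner r) 0 b := by
  obtain ⟨hbμ, hbc⟩ := (mem_removeCorner hr).mp hb
  rw [Function.update_of_ne hbc]
  by_cases hac : a = μ.corner r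
  · rw [hac, Function.update_self]
    exact (T.mem_Icc hbμ).1
  · rwa [Function.update_of_ne hac]

def restrict (hT : T.1 (μ.corner r) = n + 1) : SYT (μ.removeCorner r) n :=
  ⟨Function.update T.1 (μ.corner r) 0, bijOn_update_corner_zero T hr hT,
    fun i j h => update_corner_zero_lt_update_corner_zero T hr h
      (T.2.2.1 i j ((mem_removeCorner hr).mp h).1),
    fun i j h => update_corner_zero_lt_update_corner_zero T hr h
      (T.2.2.2.1 i j ((mem_removeCorner hr).mp h).1),
    fun c hc => by
      by_cases hcc : c = μ.corner r
      · rw [hcc, Function.update_self]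
      · rw [Function.update_of_ne hcc]
        exact T.eq_zero fun h => hc ((mem_removeCorner hr).mpr ⟨h, hcc⟩)⟩

lemma extend_restrict (hT : T.1 (μ.corner r) = n + 1) : extend hr (restrict T hr hT) = T :=
  Subtype.ext <| by
    change Function.update (Function.update T.1 _ 0) _ _ = T.1
    rw [Function.update_idem, Function.update_eq_iff]
    exact ⟨hT.symm, fun _ _ => rfl⟩

end Restrict

lemma exists_isCornerRow_eq_succ (T : SYT μ (n + 1)) :
    ∃ r, μ.IsCornerRow r ∧ T.1 (μ.corner r) = n + 1 := by
  obtain ⟨⟨i, j⟩, hc, hTc⟩ := T.2.1.surjOn (show n + 1 ∈ Set.Icc 1 (n + 1) by simp)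
  have hright : ¬ j + 1 < μ.rowLen i := fun h => by
    have h' := mem_iff_lt_rowLen.mpr h
    have := T.2.2.1 i j h'
    have := (T.mem_Icc h').2
    omega
  have hdown : ¬ j < μ.rowLen (i + 1) := fun h => by
    have h' := mem_iff_lt_rowLen.mpr h
    have := T.2.2.2.1 i j h'
    have := (T.mem_Icc h').2
    omega
  have := mem_iff_lt_rowLen.mp hc
  refine ⟨i, by unfold IsCornerRow; omega, ?_⟩
  rwa [corner, show μ.rowLen i - 1 = j by omega]

lemma bijective_extend :
    Function.Bijective fun p : Σ r : μ.cornerRows, SYT (μ.removeCorner r) n =>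
      extend (mem_cornerRows.mp p.1.2) p.2 := by
  refine ⟨?_, fun T => ?_⟩
  · rintro ⟨⟨r, hr⟩, T⟩ ⟨⟨r', hr'⟩, T'⟩ h
    have hc : μ.corner r = μ.corner r' := (extend_apply_eq_succ_iff _ _).mp <|
      (congrArg (fun T : SYT μ (n + 1) => T.1 (μ.corner r)) h).symm.trans
        ((extend_apply_eq_succ_iff _ _).mpr rfl)
    obtain rfl : r = r' := congrArg Prod.fst hc
    obtain rfl : T = T' := ext_of_mem fun c hc => by
      have hcc := ((mem_removeCorner (mem_cornerRows.mp hr)).mp hc).2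
      simpa [extend, Function.update_of_ne hcc] using congrArg (fun T => T.1 c) h
    rfl
  · obtain ⟨r, hr, hT⟩ := exists_isCornerRow_eq_succ T
    exact ⟨⟨⟨r, mem_cornerRows.mpr hr⟩, restrict T hr hT⟩, extend_restrict T hr hT⟩

theorem card_succ :
    Nat.card (SYT μ (n + 1)) = ∑ r ∈ μ.cornerRows, Nat.card (SYT (μ.removeCorner r) n) := by
  rw [← Nat.card_congr (Equiv.ofBijective _ bijective_extend), Nat.card_sigma,
    ← sum_coe_sort μ.cornerRows]

end SYT

theorem card_SYT_mul_hookProd (μ : YoungDiagram) :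
    (Nat.card (SYT μ μ.card) : ℚ) * hookProd μ = (μ.card)! := by
  induction h : μ.card generalizing μ with
  | zero =>
    rw [SYT.card_eq_one_of_card_eq_zero h, hookProd, card_eq_zero.mp h]
    simp
  | succ n ih =>
    calc (Nat.card (SYT μ (n + 1)) : ℚ) * hookProd μ
        = ∑ r ∈ μ.cornerRows, (Nat.card (SYT (μ.removeCorner r) n) : ℚ) *
            hookProd (μ.removeCorner r) * cornerWeight μ r := by
          rw [SYT.card_succ, Nat.cast_sum, sum_mul]
          refine sum_congr rfl fun r hr => ?_
          rw [hookProd_eq_mul_cornerWeight (mem_cornerRows.mp hr), mul_assoc]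
      _ = ∑ r ∈ μ.cornerRows, (n ! : ℚ) * cornerWeight μ r := by
          refine sum_congr rfl fun r hr => ?_
          have hcard := card_removeCorner (mem_cornerRows.mp hr)
          rw [ih _ (by omega)]
      _ = (n + 1)! := by
          rw [← mul_sum, sum_cornerWeight, h, Nat.factorial_succ]
          push_cast
          ring

/-- Hook length formula: the number of standard Young tableaux of shape `μ` with `n`
cells equals `n!` divided by the product of the hook lengths of the cells of `μ`. -/
theorem stmt_10 (μ : YoungDiagram) (n : ℕ) (hn : μ.card = n) :
    (Nat.card (SYT μ n) : ℚ) =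
      (n.factorial : ℚ) / ∏ c ∈ μ.cells, (hookLength μ c.1 c.2 : ℚ) := by
  subst hn
  have hH : (hookProd μ : ℚ) ≠ 0 := Nat.cast_ne_zero.mpr <| prod_ne_zero_iff.mpr fun c hc =>
    (hookLength_pos ((mem_cells c).mp hc)).ne'
  rw [← Nat.cast_prod, ← hookProd, eq_div_iff hH, card_SYT_mul_hookProd]
end

section
/- Let m_1 < m_2 < ... < m_k be distinct nonnegative integers with m = ∑ m_i, and let n ≥ 0. Define b_{m}(y_1,...,y_k) = det(y_i^{(m_j)})_{i,j}, the determinant of the matrix of falling factorials. Then as polynomials: b_m(x_1,...,x_k) · ((∑ x_i) - m)^{(n)} = ∑_{n_1+...+n_k = n+m} (n!/∏ n_i!) · b_m(n_1,...,n_k) · ∏_i x_i^{(n_i)}, where the sum is over k-tuples of nonnegative integers. -/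
open MvPolynomial Finset

/-- The rational falling factorial `x (x-1) ⋯ (x-m+1)`. -/
def fallFacQ (x : ℚ) (m : ℕ) : ℚ := ∏ j ∈ Finset.range m, (x - j)

/-!
Induction on `n`. Every `c` in the sum has `∑ᵢ cᵢ = n + m`, so multiplying by `∑ᵢ xᵢ - m - n`
multiplies `∏ᵢ xᵢ^{(cᵢ)}` by `∑ᵢ (xᵢ - cᵢ)`, and `xᵢ^{(cᵢ)} (xᵢ - cᵢ) = xᵢ^{(cᵢ+1)}`. The
coefficients then obey the required recursion because of the determinant identity
`∑ᵢ yᵢ b_m(y - eᵢ) = (∑ᵢ yᵢ - m) b_m(y)`, which comes from `y (y-1)^{(a)} = y^{(a)} (y - a)` in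
row `i` and `∑ᵢ det (A with row i scaled by w) = (∑ w) det A`. For `n = 0`, the Leibniz
expansion of `b_m(x)` reduces the claim to
`∏ᵢ xᵢ^{(dᵢ)} = ∑_{∑ cᵢ = ∑ dᵢ} ∏ᵢ (cᵢ^{(dᵢ)} / cᵢ!) ∏ᵢ xᵢ^{(cᵢ)}`, where only `c = d` contributes.
-/

open Finset.Nat (antidiagonalTuple mem_antidiagonalTuple)

lemma fallFacQ_succ (x : ℚ) (m : ℕ) : fallFacQ x (m + 1) = fallFacQ x m * (x - m) :=
  prod_range_succ _ _

lemma fallFacQ_succ' (x : ℚ) (m : ℕ) : fallFacQ x (m + 1) = x * fallFacQ (x - 1) m := by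
  unfold fallFacQ
  rw [prod_range_succ']
  push_cast
  simp only [sub_sub, add_comm (1 : ℚ), sub_zero, mul_comm]

lemma mul_fallFacQ_sub_one (x : ℚ) (m : ℕ) :
    x * fallFacQ (x - 1) m = fallFacQ x m * (x - m) := by
  rw [← fallFacQ_succ', fallFacQ_succ]

lemma fallFacQ_natCast_self (c : ℕ) : fallFacQ c c = c.factorial := by
  induction c with
  | zero => simp [fallFacQ]
  | succ c ih => push_cast [fallFacQ_succ', add_sub_cancel_right, ih, Nat.factorial_succ]; rfl

lemma fallFacQ_natCast_of_lt {c m : ℕ} (h : c < m) : fallFacQ c m = 0 :=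
  prod_eq_zero (mem_range.2 h) (sub_self _)

lemma fallFac_succ {k : ℕ} (p : MvPolynomial (Fin k) ℚ) (n : ℕ) :
    fallFac p (n + 1) = fallFac p n * (p - n) :=
  prod_range_succ _ _

section Determinant

variable {R ι : Type*} [CommRing R] [Fintype ι] [DecidableEq ι]

lemma Matrix.det_updateRow_eq_sum_adjugate (A : Matrix ι ι R) (i : ι) (v : ι → R) :
    (A.updateRow i v).det = ∑ j, v j * A.adjugate j i := by
  rw [← Matrix.cramer_transpose_apply, Matrix.cramer_eq_adjugate_mulVec,
    ← Matrix.adjugate_transpose, Matrix.mulVec, dotProduct]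
  simp only [Matrix.transpose_apply, mul_comm]

lemma Matrix.sum_det_updateRow_mul (A : Matrix ι ι R) (w : ι → R) :
    ∑ i, (A.updateRow i fun j => w j * A i j).det = (∑ j, w j) * A.det := by
  simp only [Matrix.det_updateRow_eq_sum_adjugate]
  rw [sum_comm, sum_mul]
  refine sum_congr rfl fun j _ => ?_
  have := congrFun (congrFun (Matrix.adjugate_mul A) j) j
  simp only [Matrix.mul_apply, Matrix.smul_apply, Matrix.one_apply_eq, smul_eq_mul, mul_one] at this
  simp only [mul_assoc, ← mul_sum, mul_comm (A _ j), this]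

end Determinant

section FallFacDet

variable {ι : Type*} [Fintype ι] [DecidableEq ι]

def fallFacDet (m : ι → ℕ) (y : ι → ℚ) : ℚ :=
  (Matrix.of fun i j => fallFacQ (y i) (m j)).det

lemma sum_mul_fallFacDet_sub_single (m : ι → ℕ) (y : ι → ℚ) :
    ∑ i, y i * fallFacDet m (y - Pi.single i 1) =
      (∑ i, y i - ∑ j, (m j : ℚ)) * fallFacDet m y := by
  set A : Matrix ι ι ℚ := Matrix.of fun i j => fallFacQ (y i) (m j)
  have hrow : ∀ i, y i * fallFacDet m (y - Pi.single i 1) =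
      y i * A.det - (A.updateRow i fun j => (m j : ℚ) * A i j).det := by
    intro i
    have hA : (Matrix.of fun r j => fallFacQ ((y - Pi.single i 1 : ι → ℚ) r) (m j)) =
        A.updateRow i fun j => fallFacQ (y i - 1) (m j) := by
      ext r j
      by_cases hr : r = i
      · subst hr; simp [A]
      · simp [A, hr]
    rw [← congrArg Matrix.det (Matrix.updateRow_eq_self A i)]
    simp only [fallFacDet, hA, Matrix.det_updateRow_eq_sum_adjugate, mul_sum, ← sum_sub_distrib]
    refine sum_congr rfl fun j _ => ?_
    rw [← mul_assoc, mul_fallFacQ_sub_one]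
    simp only [A, Matrix.of_apply]
    ring
  rw [sum_congr rfl fun i _ => hrow i, sum_sub_distrib, ← sum_mul,
    Matrix.sum_det_updateRow_mul, fallFacDet, sub_mul]

end FallFacDet

lemma exists_lt_of_sum_eq_of_ne {ι : Type*} [Fintype ι] {c d : ι → ℕ}
    (hsum : ∑ i, c i = ∑ i, d i) (hne : c ≠ d) : ∃ i, c i < d i := by
  by_contra! hle
  exact hne (funext fun i => ((sum_eq_sum_iff_of_le fun i _ => hle i).1 hsum.symm i
    (mem_univ i)).symm)

section Antidiagonal

variable {k : ℕ}

lemma sum_antidiagonalTuple_add_single {M : Type*} [AddCommMonoid M] (N : ℕ) (i : Fin k)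
    (f : (Fin k → ℕ) → M) :
    ∑ c ∈ antidiagonalTuple k N, f (c + Pi.single i 1) =
      ∑ c ∈ antidiagonalTuple k (N + 1), if 0 < c i then f c else 0 := by
  have hcancel : ∀ c : Fin k → ℕ, 0 < c i → c - Pi.single i 1 + Pi.single i 1 = c := by
    intro c hc
    ext j
    rcases eq_or_ne j i with rfl | hj
    · simpa using Nat.sub_add_cancel hc
    · simp [hj]
  rw [← sum_filter]
  refine sum_nbij' (· + Pi.single i 1) (· - Pi.single i 1) ?_ ?_ ?_ ?_ fun _ _ => rfl
  · intro c hc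
    simp_all [mem_antidiagonalTuple, sum_add_distrib]
  · intro c hc
    rw [mem_filter, mem_antidiagonalTuple] at hc
    have := congrArg (fun c : Fin k → ℕ => ∑ j, c j) (hcancel c hc.2)
    simp only [Pi.add_apply, sum_add_distrib, sum_pi_single', mem_univ, if_true, hc.1] at this
    rw [mem_antidiagonalTuple]
    omega
  · intro c _
    exact add_tsub_cancel_right c _
  · intro c hc
    exact hcancel c (mem_filter.1 hc).2

lemma filter_piFinset_range_eq_antidiagonalTuple (N : ℕ) :
    (Fintype.piFinset fun _ : Fin k => range (N + 1)).filter (fun c => ∑ i, c i = N) =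
      antidiagonalTuple k N := by
  ext c
  simp only [mem_filter, Fintype.mem_piFinset, mem_range, mem_antidiagonalTuple,
    and_iff_right_iff_imp]
  intro hc i
  have := single_le_sum (fun j _ => Nat.zero_le (c j)) (mem_univ i)
  omega

end Antidiagonal

section FallFacMonomial

variable {k : ℕ}

noncomputable def fallFacMonomial (c : Fin k → ℕ) : MvPolynomial (Fin k) ℚ :=
  ∏ i, fallFac (X i) (c i)

lemma fallFacMonomial_add_single (c : Fin k → ℕ) (i : Fin k) :
    fallFacMonomial (c + Pi.single i 1) =
      fallFacMonomial c * (X i - ((c i : ℕ) : MvPolynomial (Fin k) ℚ)) := by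
  unfold fallFacMonomial
  rw [← mul_prod_erase _ _ (mem_univ i), ← mul_prod_erase _ _ (mem_univ i)]
  rw [prod_congr rfl fun j hj => by rw [Pi.add_apply, Pi.single_eq_of_ne (ne_of_mem_erase hj),
    add_zero]]
  simp only [Pi.add_apply, Pi.single_eq_same, fallFac_succ]
  ring

lemma sum_mul_sum_X_sub (N : ℕ) (a : (Fin k → ℕ) → ℚ) :
    (∑ c ∈ antidiagonalTuple k N, C (a c) * fallFacMonomial c) *
        (∑ i, X i - ((N : ℕ) : MvPolynomial (Fin k) ℚ)) =
      ∑ c ∈ antidiagonalTuple k (N + 1),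
        C (∑ i, if 0 < c i then a (c - Pi.single i 1) else 0) * fallFacMonomial c := by
  have hsplit : ∀ c ∈ antidiagonalTuple k N,
      C (a c) * fallFacMonomial c * (∑ i, X i - ((N : ℕ) : MvPolynomial (Fin k) ℚ)) =
        ∑ i, C (a c) * fallFacMonomial (c + Pi.single i 1) := by
    intro c hc
    rw [← (mem_antidiagonalTuple.1 hc), Nat.cast_sum, ← sum_sub_distrib, mul_sum]
    simp only [fallFacMonomial_add_single, mul_assoc]
  rw [sum_mul, sum_congr rfl hsplit, sum_comm]
  simp only [map_sum, sum_mul, apply_ite C, map_zero, ite_mul, zero_mul]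
  conv_rhs => rw [sum_comm]
  refine sum_congr rfl fun i _ => ?_
  rw [← sum_antidiagonalTuple_add_single]
  simp only [add_tsub_cancel_right]

lemma fallFacMonomial_eq_sum (d : Fin k → ℕ) :
    fallFacMonomial d = ∑ c ∈ antidiagonalTuple k (∑ i, d i),
      C (∏ i, fallFacQ (c i) (d i) / (c i).factorial) * fallFacMonomial c := by
  rw [sum_eq_single_of_mem d (mem_antidiagonalTuple.2 rfl)]
  · simp [fallFacQ_natCast_self, div_self, Nat.factorial_ne_zero]
  · intro c hc hne
    obtain ⟨i, hi⟩ := exists_lt_of_sum_eq_of_ne (mem_antidiagonalTuple.1 hc) hne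
    rw [prod_eq_zero (mem_univ i) (by rw [fallFacQ_natCast_of_lt hi, zero_div]), map_zero,
      zero_mul]

end FallFacMonomial

section Coefficients

variable {ι : Type*} [DecidableEq ι]

lemma prod_factorial_tsub_single_mul [Fintype ι] {c : ι → ℕ} {i : ι} (hi : 0 < c i) :
    (∏ j, ((c - Pi.single i 1 : ι → ℕ) j).factorial) * c i = ∏ j, (c j).factorial := by
  rw [← mul_prod_erase _ _ (mem_univ i),
    ← mul_prod_erase _ (fun j => (c j).factorial) (mem_univ i),
    prod_congr rfl fun j hj => by
      rw [Pi.sub_apply, Pi.single_eq_of_ne (ne_of_mem_erase hj), tsub_zero]]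
  rw [Pi.sub_apply, Pi.single_eq_same, mul_right_comm, mul_comm _ (c i),
    Nat.mul_factorial_pred hi.ne']

lemma natCast_tsub_single {c : ι → ℕ} {i : ι} (hi : 0 < c i) :
    (fun j => ((c - Pi.single i 1 : ι → ℕ) j : ℚ)) =
      (fun j => (c j : ℚ)) - Pi.single i 1 := by
  ext j
  rcases eq_or_ne j i with rfl | hj
  · simp [Nat.cast_sub hi]
  · simp [hj]

end Coefficients

section Expansion

variable {k : ℕ} (m : Fin k → ℕ)

noncomputable def expansionCoeff (n : ℕ) (c : Fin k → ℕ) : ℚ :=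
  (n.factorial : ℚ) / (∏ i, ((c i).factorial : ℚ)) * fallFacDet m fun i => (c i : ℚ)

lemma sum_expansionCoeff_tsub_single (n : ℕ) {c : Fin k → ℕ}
    (hc : ∑ i, c i = n + 1 + ∑ i, m i) :
    ∑ i, (if 0 < c i then expansionCoeff m n (c - Pi.single i 1) else 0) =
      expansionCoeff m (n + 1) c := by
  have hterm : ∀ i, (if 0 < c i then expansionCoeff m n (c - Pi.single i 1) else 0) =
      (n.factorial : ℚ) / (∏ j, ((c j).factorial : ℚ)) *
        ((c i : ℚ) * fallFacDet m ((fun j => (c j : ℚ)) - Pi.single i 1)) := by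
    intro i
    split_ifs with hi
    · have hprod : (∏ j, (((c - Pi.single i 1 : Fin k → ℕ) j).factorial : ℚ)) * c i =
          ∏ j, ((c j).factorial : ℚ) := mod_cast prod_factorial_tsub_single_mul hi
      rw [expansionCoeff, natCast_tsub_single hi, ← hprod]
      have : (c i : ℚ) ≠ 0 := Nat.cast_ne_zero.2 hi.ne'
      field_simp
    · simp [Nat.eq_zero_of_not_pos hi]
  rw [sum_congr rfl fun i _ => hterm i, ← mul_sum, sum_mul_fallFacDet_sub_single,
    ← Nat.cast_sum, hc, expansionCoeff, Nat.factorial_succ]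
  push_cast
  ring

lemma det_fallFac_eq_sum :
    (Matrix.of fun i j : Fin k => fallFac (X i) (m j)).det =
      ∑ c ∈ antidiagonalTuple k (∑ i, m i), C (expansionCoeff m 0 c) * fallFacMonomial c := by
  have hcoeff : ∀ c : Fin k → ℕ, expansionCoeff m 0 c = ∑ σ : Equiv.Perm (Fin k),
      Equiv.Perm.sign σ * ∏ i, fallFacQ (c i) (m (σ i)) / (c i).factorial := by
    intro c
    rw [expansionCoeff, fallFacDet, ← Matrix.det_transpose, Matrix.det_apply', mul_sum]
    refine sum_congr rfl fun σ _ => ?_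
    simp only [Matrix.transpose_apply, Matrix.of_apply, prod_div_distrib, Nat.factorial_zero,
      Nat.cast_one]
    ring
  have hperm : ∀ σ : Equiv.Perm (Fin k), ∏ i, fallFac (X i) (m (σ i)) =
      ∑ c ∈ antidiagonalTuple k (∑ i, m i),
        C (∏ i, fallFacQ (c i) (m (σ i)) / (c i).factorial) * fallFacMonomial c := by
    intro σ
    rw [← Equiv.sum_comp σ m]
    exact fallFacMonomial_eq_sum (m ∘ σ)
  rw [← Matrix.det_transpose, Matrix.det_apply']
  simp only [Matrix.transpose_apply, Matrix.of_apply, hperm, hcoeff, map_sum, map_mul, map_intCast,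
    mul_sum, sum_mul, mul_assoc]
  exact sum_comm

lemma det_mul_fallFac_eq_sum (n : ℕ) :
    (Matrix.of fun i j : Fin k => fallFac (X i) (m j)).det *
        fallFac ((∑ i : Fin k, X i) - ((∑ i, m i : ℕ) : MvPolynomial (Fin k) ℚ)) n =
      ∑ c ∈ antidiagonalTuple k (n + ∑ i, m i),
        C (expansionCoeff m n c) * fallFacMonomial c := by
  induction n with
  | zero => simpa [fallFac] using det_fallFac_eq_sum m
  | succ n ih =>
    rw [fallFac_succ, ← mul_assoc, ih, sub_sub, ← Nat.cast_add, add_comm (∑ i, m i),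
      sum_mul_sum_X_sub, add_right_comm]
    exact sum_congr rfl fun c hc => by
      rw [sum_expansionCoeff_tsub_single m n (mem_antidiagonalTuple.1 hc)]

end Expansion

theorem stmt_11_general (k n : ℕ) (m : Fin k → ℕ) :
    Matrix.det (Matrix.of fun i j : Fin k => fallFac (X i) (m j)) *
        fallFac ((∑ i : Fin k, X i) - ((∑ i, m i : ℕ) : MvPolynomial (Fin k) ℚ)) n =
      ∑ c ∈ (Fintype.piFinset fun _ : Fin k =>
            Finset.range (n + (∑ i, m i) + 1)).filter
          (fun c => ∑ i, c i = n + ∑ i, m i),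
        C ((n.factorial : ℚ) / (∏ i, ((c i).factorial : ℚ)) *
            Matrix.det (Matrix.of fun i j : Fin k => fallFacQ (c i : ℚ) (m j))) *
          ∏ i, fallFac (X i) (c i) := by
  rw [filter_piFinset_range_eq_antidiagonalTuple]
  exact det_mul_fallFac_eq_sum m n

/-- For `m₁ < ⋯ < m_k` with `m = ∑ mᵢ`, writing `b_m(y) = det(yᵢ^{(m_j)})`,
`b_m(x₁,…,x_k) · (∑xᵢ - m)^{(n)}
  = ∑_{n₁+⋯+n_k = n+m} (n!/∏ nᵢ!) · b_m(n₁,…,n_k) · ∏ᵢ xᵢ^{(nᵢ)}`. -/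
theorem stmt_11 (k n : ℕ) (hk : 0 < k) (m : Fin k → ℕ) (hm : StrictMono m) :
    Matrix.det (Matrix.of fun i j : Fin k => fallFac (X i) (m j)) *
        fallFac ((∑ i : Fin k, X i) - ((∑ i, m i : ℕ) : MvPolynomial (Fin k) ℚ)) n =
      ∑ c ∈ (Fintype.piFinset fun _ : Fin k =>
            Finset.range (n + (∑ i, m i) + 1)).filter
          (fun c => ∑ i, c i = n + ∑ i, m i),
        C ((n.factorial : ℚ) / (∏ i, ((c i).factorial : ℚ)) *
            Matrix.det (Matrix.of fun i j : Fin k => fallFacQ (c i : ℚ) (m j))) *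
          ∏ i, fallFac (X i) (c i) :=
  stmt_11_general k n m
end

section
/- Let m_1 < ... < m_k be distinct nonnegative integers, m = ∑ m_i, n ≥ 0. Then ∏-identity of homogeneous polynomials: det(x_i^{m_j})_{i,j} · (x_1+...+x_k)^n = ∑_{n_1+...+n_k=n+m} (n!/∏ n_i!) · det(c_i^{(m_j)})|_{c=(n_1,...,n_k)} · ∏_i x_i^{n_i}, where det(c_i^{(m_j)}) is the determinant of falling factorials evaluated at the integers n_1,...,n_k. -/
/-!
Expanding both determinants over permutations splits the identity into one identity per
monomial: `x^μ · (∑ xᵢ)ⁿ = ∑_c n!/∏ cᵢ! · ∏ cᵢ^{(μᵢ)} · x^c`. This is the multinomial theorem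
shifted by `c = d + μ`, since `(dᵢ + μᵢ)! = dᵢ! · (dᵢ + μᵢ)^{(μᵢ)}`, while the falling
factorials vanish exactly at the `c` with some `cᵢ < μᵢ`, which do not occur on the left.
-/

open MvPolynomial Finset

open Nat Equiv

lemma fallFacQ_natCast (c m : ℕ) : fallFacQ (c : ℚ) m = c.descFactorial m := by
  rw [fallFacQ, ← descPochhammer_eval_eq_prod_range, descPochhammer_eval_eq_descFactorial]

lemma Matrix.det_of_eq_sum_sign_smul_prod {ι R : Type*} [Fintype ι] [DecidableEq ι] [CommRing R]
    (f : ι → ι → R) : (Matrix.of f).det = ∑ σ : Perm ι, Perm.sign σ • ∏ i, f i (σ i) := by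
  rw [← Matrix.det_transpose, Matrix.det_apply]
  rfl

lemma filter_piFinset_range_eq_piAntidiag {ι : Type*} [Fintype ι] [DecidableEq ι] (N : ℕ) :
    {c ∈ Fintype.piFinset fun _ : ι => range (N + 1) | ∑ i, c i = N} = piAntidiag univ N := by
  ext c
  simp only [mem_filter, Fintype.mem_piFinset, mem_range, mem_piAntidiag, mem_univ,
    implies_true, and_true, and_iff_right_iff_imp]
  rintro rfl i
  exact Nat.lt_succ_of_le (single_le_sum (fun j _ => Nat.zero_le (c j)) (mem_univ i))

lemma sum_piAntidiag_univ_add_eq {ι M : Type*} [Fintype ι] [DecidableEq ι] [AddCommMonoid M]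
    (μ : ι → ℕ) (n : ℕ) (g : (ι → ℕ) → M) (hg : ∀ c, ¬ μ ≤ c → g c = 0) :
    ∑ c ∈ piAntidiag univ (n + ∑ i, μ i), g c = ∑ d ∈ piAntidiag univ n, g (d + μ) := by
  rw [show ∑ d ∈ piAntidiag univ n, g (d + μ) =
      ∑ c ∈ (piAntidiag univ n).map (addRightEmbedding μ), g c by rw [sum_map]; rfl]
  refine (sum_subset (fun c hc => ?_) fun c hc hc' => hg c fun hμc => hc' ?_).symm
  · obtain ⟨d, hd, rfl⟩ := mem_map.mp hc
    simp_all [sum_add_distrib]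
  · refine mem_map.mpr ⟨c - μ, ?_, tsub_add_cancel_of_le hμc⟩
    have hsum : ∑ i, (c i - μ i) + ∑ i, μ i = n + ∑ i, μ i := by
      rw [← sum_add_distrib, sum_congr rfl fun i _ => tsub_add_cancel_of_le (hμc i)]
      exact (mem_piAntidiag.mp hc).1
    simpa using hsum

lemma factorial_div_prod_factorial_add_mul_prod_descFactorial {ι : Type*} [Fintype ι]
    (d μ : ι → ℕ) :
    ((∑ i, d i)! : ℚ) / (∏ i, ((d i + μ i)! : ℚ)) * ∏ i, ((d i + μ i).descFactorial (μ i) : ℚ) =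
      multinomial univ d := by
  have hfac (i : ι) : ((d i + μ i)! : ℚ) = (d i)! * (d i + μ i).descFactorial (μ i) := by
    have := factorial_mul_descFactorial (Nat.le_add_left (μ i) (d i))
    rw [Nat.add_sub_cancel] at this
    exact_mod_cast this.symm
  have hdesc : ∏ i, ((d i + μ i).descFactorial (μ i) : ℚ) ≠ 0 :=
    prod_ne_zero_iff.mpr fun i _ =>
      Nat.cast_ne_zero.mpr (descFactorial_pos.mpr (Nat.le_add_left _ _)).ne'
  have hfact : ∏ i, ((d i)! : ℚ) ≠ 0 :=
    prod_ne_zero_iff.mpr fun i _ => Nat.cast_ne_zero.mpr (factorial_ne_zero _)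
  have hspec : ((∑ i, d i)! : ℚ) = (∏ i, ((d i)! : ℚ)) * multinomial univ d := by
    exact_mod_cast (multinomial_spec univ d).symm
  simp_rw [hfac]
  rw [prod_mul_distrib, hspec]
  field_simp

theorem prod_pow_mul_sum_pow_eq_sum_piAntidiag {ι A : Type*} [Fintype ι] [DecidableEq ι]
    [CommSemiring A] [Algebra ℚ A] (x : ι → A) (μ : ι → ℕ) (n : ℕ) :
    (∏ i, x i ^ μ i) * (∑ i, x i) ^ n =
      ∑ c ∈ piAntidiag univ (n + ∑ i, μ i),
        ((n ! : ℚ) / (∏ i, ((c i)! : ℚ)) * ∏ i, fallFacQ (c i) (μ i)) • ∏ i, x i ^ c i := by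
  rw [sum_piAntidiag_univ_add_eq]
  · rw [sum_pow_eq_sum_piAntidiag, mul_sum]
    refine sum_congr rfl fun d hd => ?_
    obtain rfl : ∑ i, d i = n := (mem_piAntidiag.mp hd).1
    simp only [Pi.add_apply, fallFacQ_natCast, pow_add, prod_mul_distrib,
      factorial_div_prod_factorial_add_mul_prod_descFactorial, Nat.cast_smul_eq_nsmul, nsmul_eq_mul]
    ring
  · intro c hμc
    obtain ⟨i, hi⟩ : ∃ i, c i < μ i := by simpa [Pi.le_def] using hμc
    have hzero : fallFacQ (c i) (μ i) = 0 := by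
      rw [fallFacQ_natCast, descFactorial_eq_zero_iff_lt.mpr hi, Nat.cast_zero]
    rw [prod_eq_zero (f := fun i => fallFacQ (c i) (μ i)) (mem_univ i) hzero, mul_zero, zero_smul]

theorem stmt_12_general (k n : ℕ) (m : Fin k → ℕ) :
    Matrix.det (Matrix.of fun i j : Fin k => (X i : MvPolynomial (Fin k) ℚ) ^ m j) *
        (∑ i : Fin k, X i) ^ n =
      ∑ c ∈ (Fintype.piFinset fun _ : Fin k =>
            Finset.range (n + (∑ i, m i) + 1)).filter
          (fun c => ∑ i, c i = n + ∑ i, m i),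
        C ((n.factorial : ℚ) / (∏ i, ((c i).factorial : ℚ)) *
            Matrix.det (Matrix.of fun i j : Fin k => fallFacQ (c i : ℚ) (m j))) *
          ∏ i, (X i : MvPolynomial (Fin k) ℚ) ^ c i := by
  rw [filter_piFinset_range_eq_piAntidiag, Matrix.det_of_eq_sum_sign_smul_prod, sum_mul]
  simp_rw [C_mul', Matrix.det_of_eq_sum_sign_smul_prod, mul_sum, sum_smul]
  rw [sum_comm]
  refine sum_congr rfl fun σ _ => ?_
  rw [smul_mul_assoc, prod_pow_mul_sum_pow_eq_sum_piAntidiag, Equiv.sum_comp σ m, smul_sum]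
  refine sum_congr rfl fun c _ => ?_
  rw [mul_smul_comm, smul_assoc]

/-- For `m₁ < ⋯ < m_k` with `m = ∑ mᵢ`, the alternant identity
`det(xᵢ^{m_j}) · (x₁+⋯+x_k)^n
  = ∑_{n₁+⋯+n_k = n+m} (n!/∏ nᵢ!) · det(nᵢ^{(m_j)}) · ∏ᵢ xᵢ^{nᵢ}`. -/
theorem stmt_12 (k n : ℕ) (hk : 0 < k) (m : Fin k → ℕ) (hm : StrictMono m) :
    Matrix.det (Matrix.of fun i j : Fin k => (X i : MvPolynomial (Fin k) ℚ) ^ m j) *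
        (∑ i : Fin k, X i) ^ n =
      ∑ c ∈ (Fintype.piFinset fun _ : Fin k =>
            Finset.range (n + (∑ i, m i) + 1)).filter
          (fun c => ∑ i, c i = n + ∑ i, m i),
        C ((n.factorial : ℚ) / (∏ i, ((c i).factorial : ℚ)) *
            Matrix.det (Matrix.of fun i j : Fin k => fallFacQ (c i : ℚ) (m j))) *
          ∏ i, (X i : MvPolynomial (Fin k) ℚ) ^ c i :=
  stmt_12_general k n m
end

section
/- Let (m_1,...,m_k) and (n_1,...,n_k) be strictly increasing k-tuples of nonnegative integers with n_i ≥ m_i for all i; set m = ∑ m_i and n + m = ∑ n_i. Then the number of directed paths from (m_1,...,m_k) to (n_1,...,n_k) in the restricted Young graph (edges increase one coordinate by 1, preserving strict monotonicity and nonnegativity) equals (n!/∏ n_i!) · det(n_i^{(m_j)})_{i,j}, where c^{(m)} = c(c-1)···(c-m+1). -/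
open Finset

/-- A directed path of length `n` from `v` to `u` in the restricted Young graph `Y_k`:
vertices are strictly increasing `k`-tuples of nonnegative integers, each step
increases exactly one coordinate by `1`. -/
def YoungPath (k n : ℕ) (v u : Fin k → ℕ) : Type :=
  { f : Fin (n + 1) → (Fin k → ℕ) //
      f 0 = v ∧ f (Fin.last n) = u ∧ (∀ j, StrictMono (f j)) ∧
      ∀ j : Fin n, ∃ i : Fin k,
        f j.succ = Function.update (f j.castSucc) i (f j.castSucc i + 1) }

/-! Removing the last step of a path gives `N(c) = ∑_{cᵢ ≠ 0} N(c - eᵢ)`, where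
`N(c - eᵢ) = 0` when `c - eᵢ` is not strictly increasing. Writing `M(c)` for the matrix
`(cᵢ^{(mⱼ)})`, the right-hand side `n! / ∏ cᵢ! · det M(c)` obeys the same recursion: the identity
`c (c-1)^{(m)} = (c - m) c^{(m)}`, applied to each term of the permutation expansion, gives
`∑ᵢ cᵢ det M(c - eᵢ) = (∑ cᵢ - ∑ mⱼ) det M(c)`, and `det M(c - eᵢ) = 0` when `c - eᵢ` repeats an
entry. The initial values agree as well: `M(m)` is triangular with diagonal `mᵢ!`, and
`det M(c) = 0` as soon as some `cᵢ < mᵢ`. -/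

open Function

lemma eq_update_add_one_iff {ι : Type*} [DecidableEq ι] {u w : ι → ℕ} {i : ι} :
    u = update w i (w i + 1) ↔ u i ≠ 0 ∧ w = update u i (u i - 1) := by
  constructor
  · rintro rfl
    simp
  · rintro ⟨hi, rfl⟩
    simp [Nat.sub_add_cancel (Nat.one_le_iff_ne_zero.2 hi)]

lemma update_sub_one_injOn {ι : Type*} [DecidableEq ι] (u : ι → ℕ) :
    Set.InjOn (fun i => update u i (u i - 1)) {i | u i ≠ 0} := by
  intro i hi j _ h
  by_contra hne
  have := congrFun h i
  simp only [update_self, update_of_ne hne] at this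
  exact hi (by omega)

lemma Finset.sum_update_sub_one_add_one {ι : Type*} [Fintype ι] [DecidableEq ι] {f : ι → ℕ} {i : ι}
    (hi : f i ≠ 0) : ∑ p, update f i (f i - 1) p + 1 = ∑ p, f p := by
  rw [sum_update_of_mem (mem_univ i), sum_eq_add_sum_sdiff_singleton_of_mem (mem_univ i)]
  omega

lemma Finset.mul_prod_factorial_update_sub_one {ι : Type*} [Fintype ι] [DecidableEq ι]
    {f : ι → ℕ} {i : ι} (hi : f i ≠ 0) :
    f i * ∏ p, (update f i (f i - 1) p).factorial = ∏ p, (f p).factorial := by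
  simp_rw [apply_update (fun _ => Nat.factorial)]
  rw [prod_update_of_mem (mem_univ i), prod_eq_mul_prod_sdiff_singleton_of_mem (mem_univ i),
    ← mul_assoc, Nat.mul_factorial_pred hi]

lemma StrictMono.monotone_update_sub_one {k : ℕ} {c : Fin k → ℕ} (hc : StrictMono c) (i : Fin k) :
    Monotone (update c i (c i - 1)) := by
  refine monotone_iff_forall_lt.2 fun p q hpq => ?_
  rcases eq_or_ne p i with rfl | hp
  · simpa [update_of_ne hpq.ne'] using (Nat.sub_le _ _).trans (hc hpq).le
  rcases eq_or_ne q i with rfl | hq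
  · simpa [update_of_ne hp] using Nat.le_sub_one_of_lt (hc hpq)
  · simpa [update_of_ne hp, update_of_ne hq] using (hc hpq).le

lemma fallFacQ_natCast_s13 (a m : ℕ) : fallFacQ a m = a.descFactorial m := by
  rw [fallFacQ, ← descPochhammer_eval_eq_prod_range, descPochhammer_eval_eq_descFactorial]

lemma natCast_mul_descFactorial_sub_one {R : Type*} [CommRing R] (c m : ℕ) :
    (c : R) * (c - 1).descFactorial m = ((c : R) - m) * c.descFactorial m := by
  rcases lt_or_ge c m with h | h
  · simp [Nat.descFactorial_eq_zero_iff_lt.2 h,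
      Nat.descFactorial_eq_zero_iff_lt.2 (by omega : c - 1 < m)]
  · rcases c with _ | c
    · simp [Nat.le_zero.1 h]
    · rw [← Nat.cast_sub h, Nat.add_sub_cancel]
      exact_mod_cast congrArg (Nat.cast (R := R))
        ((Nat.succ_descFactorial_succ c m).symm.trans (Nat.descFactorial_succ _ m))

section descFactorialMatrix

variable (R : Type*) [CommRing R] {k : ℕ}

def descFactorialMatrix (c m : Fin k → ℕ) : Matrix (Fin k) (Fin k) R :=
  Matrix.of fun i j => ((c i).descFactorial (m j) : R)

variable {R}

lemma det_descFactorialMatrix (c m : Fin k → ℕ) :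
    (descFactorialMatrix R c m).det
      = ∑ σ : Equiv.Perm (Fin k), σ.sign * ∏ p, ((c p).descFactorial (m (σ p)) : R) := by
  rw [← Matrix.det_transpose, Matrix.det_apply']
  rfl

lemma det_descFactorialMatrix_self {c : Fin k → ℕ} (hc : StrictMono c) :
    (descFactorialMatrix R c c).det = ∏ i, ((c i).factorial : R) := by
  have : (descFactorialMatrix R c c).BlockTriangular OrderDual.toDual := fun i j hij => by
    simp [descFactorialMatrix, Nat.descFactorial_eq_zero_iff_lt.2 (hc (a := i) (b := j) hij)]
  rw [Matrix.det_of_isLowerTriangular _ this]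
  simp [descFactorialMatrix, Nat.descFactorial_self]

lemma det_descFactorialMatrix_eq_zero_of_not_injective {c : Fin k → ℕ} (hc : ¬ Injective c)
    (m : Fin k → ℕ) : (descFactorialMatrix R c m).det = 0 := by
  obtain ⟨p, q, hpq, hne⟩ := Function.not_injective_iff.1 hc
  exact Matrix.det_zero_of_row_eq hne (funext fun j => by simp [descFactorialMatrix, hpq])

/-- The entries `(c p).descFactorial (m q)` with `p ≤ i ≤ q` form a zero block whose rows and
columns together outnumber `k`, so every permutation meets it. -/
lemma det_descFactorialMatrix_eq_zero_of_lt {c m : Fin k → ℕ} (hc : Monotone c) (hm : Monotone m)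
    {i : Fin k} (h : c i < m i) : (descFactorialMatrix R c m).det = 0 := by
  refine (det_descFactorialMatrix c m).trans (sum_eq_zero fun σ _ => ?_)
  obtain ⟨p, hpi, hiσp⟩ : ∃ p, p ≤ i ∧ i ≤ σ p := by
    by_contra! hcon
    have := card_le_card_of_injOn σ (s := Iic i) (t := Iio i)
      (fun p hp => by simpa using hcon p (by simpa using hp)) σ.injective.injOn
    simp only [Fin.card_Iic, Fin.card_Iio] at this
    omega
  rw [prod_eq_zero (mem_univ p), mul_zero]
  simp [Nat.descFactorial_eq_zero_iff_lt.2 ((hc hpi).trans_lt (h.trans_le (hm hiσp)))]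

lemma natCast_mul_prod_descFactorial_update (c e : Fin k → ℕ) (i : Fin k) :
    (c i : R) * ∏ p, ((update c i (c i - 1) p).descFactorial (e p) : R)
      = ((c i : R) - e i) * ∏ p, ((c p).descFactorial (e p) : R) := by
  simp_rw [apply_update (fun p (x : ℕ) => ((x.descFactorial (e p) : ℕ) : R))]
  rw [prod_update_of_mem (mem_univ i), prod_eq_mul_prod_sdiff_singleton_of_mem (mem_univ i),
    ← mul_assoc, ← mul_assoc, natCast_mul_descFactorial_sub_one]

lemma sum_natCast_mul_det_descFactorialMatrix_update (c m : Fin k → ℕ) :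
    ∑ i, (c i : R) * (descFactorialMatrix R (update c i (c i - 1)) m).det
      = ((∑ i, c i : R) - ∑ i, (m i : R)) * (descFactorialMatrix R c m).det := by
  simp only [det_descFactorialMatrix, mul_sum]
  rw [sum_comm]
  refine sum_congr rfl fun σ _ => ?_
  calc _ = ∑ i, (σ.sign : R) * (((c i : R) - m (σ i)) * ∏ p, ((c p).descFactorial (m (σ p)) : R)) :=
        sum_congr rfl fun i _ => by
          rw [mul_left_comm, natCast_mul_prod_descFactorial_update c (fun p => m (σ p))]
    _ = _ := by
      rw [← mul_sum, ← sum_mul, sum_sub_distrib,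
        Equiv.sum_comp σ (fun i => (m i : R))]
      ring

end descFactorialMatrix

namespace YoungPath

variable {k n : ℕ} {v u : Fin k → ℕ}

instance : Finite (YoungPath k n v u) := by
  refine Finite.of_injective (fun P j => (P.2.2.2.2 j).choose) fun P Q h =>
    Subtype.ext (funext fun j => ?_)
  induction j using Fin.induction with
  | zero => rw [P.2.1, Q.2.1]
  | succ j ih =>
    have hj : (P.2.2.2.2 j).choose = (Q.2.2.2.2 j).choose := congrFun h j
    rw [(P.2.2.2.2 j).choose_spec, (Q.2.2.2.2 j).choose_spec, hj, ih]

lemma natCard_zero_self (hv : StrictMono v) : Nat.card (YoungPath k 0 v v) = 1 :=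
  Nat.card_eq_one_iff_exists.2 ⟨⟨fun _ => v, rfl, rfl, fun _ => hv, finZeroElim⟩, fun P =>
    Subtype.ext (funext fun j => by rw [Subsingleton.elim (α := Fin 1) j 0, P.2.1])⟩

lemma isEmpty_zero_of_ne (h : v ≠ u) : IsEmpty (YoungPath k 0 v u) :=
  ⟨fun ⟨_, h0, hl, _⟩ => h (h0.symm.trans hl)⟩

lemma isEmpty_of_not_strictMono (h : ¬ StrictMono u) : IsEmpty (YoungPath k n v u) :=
  ⟨fun ⟨_, _, hl, hf, _⟩ => h (hl ▸ hf (Fin.last n))⟩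

def snoc (hu : StrictMono u)
    (P : Σ i : {i // u i ≠ 0}, YoungPath k n v (update u i (u i - 1))) :
    YoungPath k (n + 1) v u where
  val := Fin.snoc (α := fun _ => Fin k → ℕ) P.2.1 u
  property := by
    obtain ⟨⟨i, hi⟩, f, h0, hl, hf, hstep⟩ := P
    dsimp only
    refine ⟨by rw [← Fin.castSucc_zero, Fin.snoc_castSucc, h0], Fin.snoc_last _ _,
      fun j => ?_, fun j => ?_⟩
    · induction j using Fin.lastCases with
      | last => rwa [Fin.snoc_last]
      | cast j => rw [Fin.snoc_castSucc]; exact hf j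
    · induction j using Fin.lastCases with
      | last =>
        refine ⟨i, ?_⟩
        rw [Fin.succ_last, Fin.snoc_last, Fin.snoc_castSucc, hl]
        exact eq_update_add_one_iff.2 ⟨hi, rfl⟩
      | cast j =>
        rw [Fin.succ_castSucc, Fin.snoc_castSucc, Fin.snoc_castSucc]
        exact hstep j

lemma snoc_bijective (hu : StrictMono u) : Bijective (snoc (n := n) (v := v) hu) := by
  constructor
  · rintro ⟨⟨i, hi⟩, P⟩ ⟨⟨i', hi'⟩, P'⟩ h
    have hPP' : P.1 = P'.1 := by
      simpa only [snoc, Fin.init_snoc] using congrArg (fun Q => Fin.init Q.1) h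
    obtain rfl : i = i' := update_sub_one_injOn u hi hi' (P.2.2.1.symm.trans (hPP' ▸ P'.2.2.1))
    obtain rfl : P = P' := Subtype.ext hPP'
    rfl
  · rintro ⟨f, h0, hl, hf, hstep⟩
    obtain ⟨i, hi⟩ := hstep (Fin.last n)
    rw [Fin.succ_last, hl] at hi
    obtain ⟨hui, hw⟩ := eq_update_add_one_iff.1 hi
    refine ⟨⟨⟨i, hui⟩, Fin.init f, by simpa [Fin.init] using h0, hw, fun j => hf _, fun j => ?_⟩,
      Subtype.ext (hl ▸ Fin.snoc_init_self f)⟩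
    rw [Fin.init, Fin.init, ← Fin.succ_castSucc]
    exact hstep j.castSucc

lemma natCard_succ (hu : StrictMono u) :
    Nat.card (YoungPath k (n + 1) v u)
      = ∑ i ∈ univ.filter (u · ≠ 0), Nat.card (YoungPath k n v (update u i (u i - 1))) := by
  rw [← Nat.card_eq_of_bijective _ (snoc_bijective hu), Nat.card_sigma,
    Finset.sum_subtype _ (fun x => mem_filter_univ x)]

end YoungPath

lemma natCard_youngPath_zero_eq {k : ℕ} {m c : Fin k → ℕ} (hm : StrictMono m) (hc : StrictMono c)
    (hsum : ∑ i, c i = ∑ i, m i) :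
    (Nat.card (YoungPath k 0 m c) : ℚ)
      = (∏ i, ((c i).factorial : ℚ))⁻¹ * (descFactorialMatrix ℚ c m).det := by
  by_cases hmc : m = c
  · subst hmc
    rw [YoungPath.natCard_zero_self hm, det_descFactorialMatrix_self hm]
    simp [prod_ne_zero_iff, Nat.factorial_ne_zero]
  · obtain ⟨i, hi⟩ : ∃ i, c i < m i := by
      by_contra! hle
      exact hmc (funext fun i => (sum_eq_sum_iff_of_le fun i _ => hle i).1 hsum.symm i
        (mem_univ i))
    have := YoungPath.isEmpty_zero_of_ne (k := k) hmc
    rw [Nat.card_of_isEmpty, det_descFactorialMatrix_eq_zero_of_lt hc.monotone hm.monotone hi]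
    simp

lemma natCard_youngPath_eq {k : ℕ} {m : Fin k → ℕ} (hm : StrictMono m) (n : ℕ) {c : Fin k → ℕ}
    (hc : StrictMono c) (hsum : ∑ i, c i = ∑ i, m i + n) :
    (Nat.card (YoungPath k n m c) : ℚ)
      = n.factorial / (∏ i, ((c i).factorial : ℚ)) * (descFactorialMatrix ℚ c m).det := by
  induction n generalizing c with
  | zero => simpa using natCard_youngPath_zero_eq hm hc hsum
  | succ n ih =>
    have hterm : ∀ i ∈ univ.filter (c · ≠ 0),
        (Nat.card (YoungPath k n m (update c i (c i - 1))) : ℚ)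
          = n.factorial / (∏ p, ((c p).factorial : ℚ))
            * ((c i : ℚ) * (descFactorialMatrix ℚ (update c i (c i - 1)) m).det) := by
      intro i hi
      have hci : c i ≠ 0 := (mem_filter.1 hi).2
      by_cases hc' : StrictMono (update c i (c i - 1))
      · have hprod : ∏ p, ((c p).factorial : ℚ)
            = c i * ∏ p, ((update c i (c i - 1) p).factorial : ℚ) := by
          exact_mod_cast (mul_prod_factorial_update_sub_one hci).symm
        rw [ih hc' (by have := sum_update_sub_one_add_one hci; omega), hprod]
        field_simp
      · have := YoungPath.isEmpty_of_not_strictMono (n := n) (v := m) hc'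
        rw [Nat.card_of_isEmpty, det_descFactorialMatrix_eq_zero_of_not_injective
          (fun hinj => hc' ((hc.monotone_update_sub_one i).strictMono_of_injective hinj))]
        simp
    rw [YoungPath.natCard_succ hc, Nat.cast_sum, sum_congr rfl hterm, ← mul_sum,
      sum_filter_of_ne fun i _ h => by contrapose! h; simp [h],
      sum_natCast_mul_det_descFactorialMatrix_update, Nat.factorial_succ]
    have hsumQ : ∑ i, (c i : ℚ) = ∑ i, (m i : ℚ) + (n + 1) := by exact_mod_cast hsum
    rw [hsumQ]
    push_cast
    ring

theorem stmt_13_general (k : ℕ) (m c : Fin k → ℕ)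
    (hm : StrictMono m) (hc : StrictMono c) (hle : ∀ i, m i ≤ c i) :
    (Nat.card (YoungPath k ((∑ i, c i) - ∑ i, m i) m c) : ℚ) =
      (((∑ i, c i) - ∑ i, m i).factorial : ℚ) / (∏ i, ((c i).factorial : ℚ)) *
        Matrix.det (Matrix.of fun i j : Fin k => fallFacQ (c i : ℚ) (m j)) := by
  have hmatrix :
      Matrix.of (fun i j : Fin k => fallFacQ (c i : ℚ) (m j)) = descFactorialMatrix ℚ c m :=
    Matrix.ext fun i j => fallFacQ_natCast_s13 (c i) (m j)
  rw [hmatrix]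
  exact natCard_youngPath_eq hm _ hc (Nat.add_sub_of_le (sum_le_sum fun i _ => hle i)).symm

/-- The number of paths in the restricted Young graph from `(m₁,…,m_k)` to `(n₁,…,n_k)`
(both strictly increasing, `nᵢ ≥ mᵢ`) equals `(n!/∏ nᵢ!) · det(nᵢ^{(m_j)})`, where
`n = ∑ nᵢ - ∑ mᵢ`. -/
theorem stmt_13 (k : ℕ) (hk : 0 < k) (m c : Fin k → ℕ)
    (hm : StrictMono m) (hc : StrictMono c) (hle : ∀ i, m i ≤ c i) :
    (Nat.card (YoungPath k ((∑ i, c i) - ∑ i, m i) m c) : ℚ) =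
      (((∑ i, c i) - ∑ i, m i).factorial : ℚ) / (∏ i, ((c i).factorial : ℚ)) *
        Matrix.det (Matrix.of fun i j : Fin k => fallFacQ (c i : ℚ) (m j)) :=
  stmt_13_general k m c hm hc hle
end

section
/- The polynomial function ψ(x_1,...,x_k) = (1/(k-ℓ)!) · ∑_π ∏_{i≤ℓ} x_{π(i)}^{(m_i)} · ∏_{i≤ℓ, i<j≤k} (x_{π(i)}+x_{π(j)})/(x_{π(i)}-x_{π(j)}), where the sum is over all permutations π of {1,...,k} and m_1 > ... > m_ℓ > 0 are fixed positive integers, is a polynomial in x_1,...,x_k (all denominators cancel). -/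
/-!
Every denominator `∏ (x_{π i} - x_{π j})` divides the Vandermonde polynomial `V`, which satisfies
`π V = sign π · V`. Writing the term at `π = 1` as `p / q` and `V = q e`, the term at `π` is
`π p / π q = sign π · π (p e) / V`, so the sum is `A / V` with `A` the antisymmetrization of `p e`. An alternating polynomial vanishes
under the specialization `x_b ↦ x_a`, so it is divisible by every prime `x_a - x_b`, and these are
pairwise non-associated; hence `V ∣ A`.
-/

open Finset

/-- The variable `xᵢ` viewed inside the field of rational functions `ℚ(x₁,…,x_k)`. -/
noncomputable def xvar (k : ℕ) (i : Fin k) : FractionRing (MvPolynomial (Fin k) ℚ) :=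
  algebraMap (MvPolynomial (Fin k) ℚ) (FractionRing (MvPolynomial (Fin k) ℚ))
    (MvPolynomial.X i)

/-- The symmetrized rational function
`ψ = (1/(k-ℓ)!) ∑_π ∏_{i≤ℓ} x_{π(i)}^{(mᵢ)} ∏_{i≤ℓ, i<j} (x_{π(i)}+x_{π(j)})/(x_{π(i)}-x_{π(j)})`. -/
noncomputable def psiFun (k ℓ : ℕ) (m : Fin k → ℕ) :
    FractionRing (MvPolynomial (Fin k) ℚ) :=
  (((k - ℓ).factorial : ℚ))⁻¹ •
    ∑ π : Equiv.Perm (Fin k),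
      (∏ i ∈ Finset.univ.filter (fun i : Fin k => (i : ℕ) < ℓ),
          ∏ j ∈ Finset.range (m i),
            (xvar k (π i) - (j : FractionRing (MvPolynomial (Fin k) ℚ)))) *
        ∏ p ∈ Finset.univ.filter
            (fun p : Fin k × Fin k => (p.1 : ℕ) < ℓ ∧ p.1 < p.2),
          (xvar k (π p.1) + xvar k (π p.2)) / (xvar k (π p.1) - xvar k (π p.2))

theorem Finset.prod_dvd_of_prime_of_dvd {M ι : Type*} [CommMonoidWithZero M] [IsCancelMulZero M]
    {s : Finset ι} {f : ι → M} {n : M} (hprime : ∀ i ∈ s, Prime (f i))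
    (hdvd_eq : ∀ i ∈ s, ∀ j ∈ s, f i ∣ f j → i = j) (hdvd : ∀ i ∈ s, f i ∣ n) :
    ∏ i ∈ s, f i ∣ n := by
  classical
  induction s using Finset.induction_on with
  | empty => simp
  | insert i s hi ih =>
    simp only [mem_insert, forall_eq_or_imp] at hprime hdvd
    obtain ⟨c, rfl⟩ := ih hprime.2
      (fun j hj l hl => hdvd_eq j (mem_insert_of_mem hj) l (mem_insert_of_mem hl)) hdvd.2
    have hndvd : ¬ f i ∣ ∏ j ∈ s, f j := fun h => by
      obtain ⟨j, hj, hij⟩ := (hprime.1.dvd_finsetProd_iff f).mp h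
      exact hi (hdvd_eq i (mem_insert_self i s) j (mem_insert_of_mem hj) hij ▸ hj)
    obtain ⟨d, rfl⟩ := (hprime.1.dvd_or_dvd hdvd.1).resolve_left hndvd
    exact ⟨d, by rw [prod_insert hi]; ac_rfl⟩

namespace MvPolynomial

open Equiv

variable {R σ : Type*} [CommRing R] [DecidableEq σ]

noncomputable def substX (a b : σ) : MvPolynomial σ R →ₐ[R] MvPolynomial σ R :=
  aeval (Function.update X b (X a))

lemma substX_X (a b i : σ) :
    substX a b (X i : MvPolynomial σ R) = if i = b then X a else X i := by
  simp [substX, Function.update_apply]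

lemma X_sub_X_dvd_sub_substX (a b : σ) (p : MvPolynomial σ R) :
    X a - X b ∣ p - substX a b p := by
  induction p using MvPolynomial.induction_on with
  | C r => simp [substX]
  | add p q hp hq => simpa [add_sub_add_comm] using dvd_add hp hq
  | mul_X p i hp =>
    have hi : X a - X b ∣ X i - substX a b (X i : MvPolynomial σ R) := by
      rw [substX_X]
      split_ifs with h
      · exact ⟨-1, by rw [h]; ring⟩
      · simp
    rw [map_mul, show p * X i - substX a b p * substX a b (X i) =
      p * (X i - substX a b (X i)) + substX a b (X i) * (p - substX a b p) by ring]
    exact dvd_add (hi.mul_left p) (hp.mul_left _)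

lemma X_sub_X_dvd_iff {a b : σ} {p : MvPolynomial σ R} :
    X a - X b ∣ p ↔ substX a b p = 0 := by
  refine ⟨?_, fun h => by simpa [h] using X_sub_X_dvd_sub_substX a b p⟩
  rintro ⟨c, rfl⟩
  by_cases h : a = b <;> simp [substX_X, h]

lemma prime_X_sub_X [IsDomain R] {a b : σ} (hab : a ≠ b) :
    Prime (X a - X b : MvPolynomial σ R) := by
  refine ⟨sub_ne_zero.mpr (X_injective.ne hab), fun hu => ?_, fun p q => ?_⟩
  · have := hu.map (substX a b)
    rw [X_sub_X_dvd_iff.mp dvd_rfl] at this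
    exact not_isUnit_zero this
  · simp only [X_sub_X_dvd_iff, map_mul]
    exact mul_eq_zero.mp


lemma eq_of_X_sub_X_dvd_X_sub_X [Nontrivial R] {a b c d : σ} (hcd : c ≠ d)
    (h : X a - X b ∣ (X c - X d : MvPolynomial σ R)) : c = b ∧ d = a ∨ c = a ∧ d = b := by
  rw [X_sub_X_dvd_iff, map_sub, sub_eq_zero, substX_X, substX_X] at h
  split_ifs at h with hc hd hd <;> simp only [X_inj] at h <;> grind

lemma substX_rename_swap (a b : σ) (p : MvPolynomial σ R) :
    substX a b (rename (swap a b) p) = substX a b p := by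
  have hswap : Function.update X b (X a) ∘ swap a b =
      (Function.update X b (X a) : σ → MvPolynomial σ R) := by
    funext i
    simp only [Function.comp_apply, swap_apply_def, Function.update_apply]
    split_ifs <;> simp_all
  rw [substX, aeval_rename, hswap]

lemma X_sub_X_dvd_of_rename_swap_eq_neg [IsDomain R] [CharZero R] {a b : σ}
    {p : MvPolynomial σ R} (h : rename (swap a b) p = -p) : X a - X b ∣ p := by
  have h' := substX_rename_swap a b p
  rw [h, map_neg] at h'
  exact X_sub_X_dvd_iff.mpr (self_eq_neg.mp h'.symm)

section Antisymmetrize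

variable [Fintype σ]

noncomputable def antisymmetrize (f : MvPolynomial σ R) : MvPolynomial σ R :=
  ∑ π : Perm σ, Perm.sign π • rename π f

lemma rename_antisymmetrize (τ : Perm σ) (f : MvPolynomial σ R) :
    rename τ (antisymmetrize f) = Perm.sign τ • antisymmetrize f := by
  rw [antisymmetrize, map_sum, smul_sum]
  refine Fintype.sum_equiv (Equiv.mulLeft τ) _ _ fun π => ?_
  rw [coe_mulLeft, Perm.sign_mul, smul_smul, ← mul_assoc, Int.units_mul_self, one_mul]
  simp only [Units.smul_def, map_zsmul, rename_rename, Perm.coe_mul]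

end Antisymmetrize

section Vandermonde

variable {n : ℕ}

noncomputable def vandermonde (n : ℕ) (R : Type*) [CommRing R] : MvPolynomial (Fin n) R :=
  ∏ p ∈ univ.filter (fun p : Fin n × Fin n => p.1 < p.2), (X p.2 - X p.1)

variable (R) in
lemma det_vandermonde_X :
    (Matrix.vandermonde (X : Fin n → MvPolynomial (Fin n) R)).det = vandermonde n R := by
  rw [Matrix.det_vandermonde, vandermonde, prod_filter, Fintype.prod_prod_type]
  refine prod_congr rfl fun i _ => ?_
  rw [← prod_filter]
  congr 1
  ext j
  simp

lemma rename_vandermonde (π : Perm (Fin n)) :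
    rename π (vandermonde n R) = Perm.sign π • vandermonde n R := by
  have hsub : (rename π : MvPolynomial (Fin n) R →ₐ[R] _).mapMatrix
      (Matrix.vandermonde X) = (Matrix.vandermonde X).submatrix π id := by
    ext i j
    simp [Matrix.vandermonde]
  rw [← det_vandermonde_X, AlgHom.map_det, hsub, Matrix.det_permute,
    Units.smul_def, zsmul_eq_mul]

lemma vandermonde_ne_zero [IsDomain R] : vandermonde n R ≠ 0 :=
  prod_ne_zero_iff.mpr fun _ hp => sub_ne_zero.mpr (X_injective.ne (mem_filter.mp hp).2.ne')

lemma vandermonde_dvd_of_rename_swap_eq_neg [IsDomain R] [CharZero R]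
    {p : MvPolynomial (Fin n) R} (h : ∀ a b, a ≠ b → rename (swap a b) p = -p) :
    vandermonde n R ∣ p := by
  refine prod_dvd_of_prime_of_dvd (fun q hq => prime_X_sub_X (mem_filter.mp hq).2.ne')
    (fun q hq r hr hqr => ?_)
    (fun q hq => X_sub_X_dvd_of_rename_swap_eq_neg (h _ _ (mem_filter.mp hq).2.ne'))
  have hq := (mem_filter.mp hq).2
  have hr := (mem_filter.mp hr).2
  rcases eq_of_X_sub_X_dvd_X_sub_X hr.ne' hqr with ⟨h2, h1⟩ | ⟨h2, h1⟩
  · exact absurd (hq.trans (h1 ▸ h2 ▸ hr)) (lt_irrefl _)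
  · exact Prod.ext h1.symm h2.symm

lemma vandermonde_dvd_antisymmetrize [IsDomain R] [CharZero R] (f : MvPolynomial (Fin n) R) :
    vandermonde n R ∣ antisymmetrize f :=
  vandermonde_dvd_of_rename_swap_eq_neg fun a b hab => by
    rw [rename_antisymmetrize, Perm.sign_swap hab, Units.neg_smul, one_smul]

lemma prod_X_sub_X_dvd_vandermonde {S : Finset (Fin n × Fin n)} (hS : ∀ p ∈ S, p.1 < p.2) :
    ∏ p ∈ S, (X p.1 - X p.2 : MvPolynomial (Fin n) R) ∣ vandermonde n R :=
  (prod_dvd_prod_of_dvd _ _ fun _ _ => dvd_sub_comm.mp dvd_rfl).trans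
    (prod_dvd_prod_of_subset _ _ _ fun p hp => mem_filter.mpr ⟨mem_univ p, hS p hp⟩)

end Vandermonde

theorem exists_algebraMap_eq_sum_rename_div_rename [IsDomain R] [CharZero R] {n : ℕ}
    (p q : MvPolynomial (Fin n) R) (hq : q ∣ vandermonde n R) :
    ∃ r : MvPolynomial (Fin n) R,
      algebraMap _ (FractionRing (MvPolynomial (Fin n) R)) r =
        ∑ π : Perm (Fin n), algebraMap _ _ (rename π p) / algebraMap _ _ (rename π q) := by
  obtain ⟨e, he⟩ := hq
  obtain ⟨r, hr⟩ := vandermonde_dvd_antisymmetrize (p * e)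
  refine ⟨r, ?_⟩
  have hinj := IsFractionRing.injective (MvPolynomial (Fin n) R)
    (FractionRing (MvPolynomial (Fin n) R))
  set φ := algebraMap (MvPolynomial (Fin n) R) (FractionRing (MvPolynomial (Fin n) R))
  have hV : φ (vandermonde n R) ≠ 0 := (map_ne_zero_iff _ hinj).mpr vandermonde_ne_zero
  have hq0 : q ≠ 0 := by
    rintro rfl
    exact vandermonde_ne_zero (by simpa using he)
  have hterm (π : Perm (Fin n)) :
      φ (rename π p) / φ (rename π q) =
        φ (Perm.sign π • rename π (p * e)) / φ (vandermonde n R) := by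
    have hqπ : φ (rename π q) ≠ 0 :=
      (map_ne_zero_iff _ hinj).mpr ((map_ne_zero_iff _ (rename_injective _ π.injective)).mpr hq0)
    rw [div_eq_div_iff hqπ hV, ← map_mul, ← map_mul]
    congr 1
    have hVπ : vandermonde n R = Perm.sign π • (rename π q * rename π e) := by
      rw [← map_mul, ← he, rename_vandermonde, smul_smul, Int.units_mul_self, one_smul]
    rw [hVπ, map_mul]
    simp only [Units.smul_def, zsmul_eq_mul]
    ring
  rw [sum_congr rfl fun π _ => hterm π, ← sum_div, ← map_sum, ← antisymmetrize, hr, map_mul,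
    mul_div_cancel_left₀ _ hV]

end MvPolynomial

open MvPolynomial

theorem stmt_18_general (k ℓ : ℕ) (m : Fin k → ℕ) :
    ∃ p : MvPolynomial (Fin k) ℚ,
      algebraMap (MvPolynomial (Fin k) ℚ) (FractionRing (MvPolynomial (Fin k) ℚ)) p =
        psiFun k ℓ m := by
  set S := univ.filter (fun p : Fin k × Fin k => (p.1 : ℕ) < ℓ ∧ p.1 < p.2)
  obtain ⟨r, hr⟩ := exists_algebraMap_eq_sum_rename_div_rename
    ((∏ i ∈ univ.filter (fun i : Fin k => (i : ℕ) < ℓ),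
        ∏ j ∈ range (m i), (X i - (j : MvPolynomial (Fin k) ℚ))) * ∏ p ∈ S, (X p.1 + X p.2))
    (∏ p ∈ S, (X p.1 - X p.2))
    (prod_X_sub_X_dvd_vandermonde fun p hp => (mem_filter.mp hp).2.2)
  have hpsi : psiFun k ℓ m = ((k - ℓ).factorial : ℚ)⁻¹ • algebraMap _ _ r := by
    rw [hr, psiFun]
    congr 1
    refine sum_congr rfl fun π _ => ?_
    simp [S, xvar, map_prod, prod_div_distrib, mul_div_assoc]
  exact ⟨_, (algebraMap.coe_smul _ r _).trans hpsi.symm⟩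

/-- For fixed positive integers `m₁ > m₂ > ⋯ > m_ℓ > 0` (`ℓ ≤ k`), the rational
function `ψ` is in fact a polynomial: all denominators cancel. -/
theorem stmt_18 (k ℓ : ℕ) (hℓ : ℓ ≤ k) (m : Fin k → ℕ)
    (hpos : ∀ i : Fin k, (i : ℕ) < ℓ → 0 < m i)
    (hanti : ∀ i j : Fin k, i < j → (j : ℕ) < ℓ → m j < m i) :
    ∃ p : MvPolynomial (Fin k) ℚ,
      algebraMap (MvPolynomial (Fin k) ℚ) (FractionRing (MvPolynomial (Fin k) ℚ)) p =
        psiFun k ℓ m :=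
  stmt_18_general k ℓ m
end
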